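/- arXiv:2006.01036 — 5 statements merged into one kernel-verified Lean document; each statement's English description precedes it below -/
import Mathlib

section
/- Outer independence implies inner independence: if Y_A ⫫_o Y_C, then for every measurable product set S_A × S_C ⊂ Ω with P(Y ∈ S_A × S_C) > 0, Y_A and Y_C are conditionally independent given the event {Y ∈ S_A × S_C}. -/
open MeasureTheory ProbabilityTheory Set
open scoped ENNReal

noncomputable section

/-- `X ⫫ Y` conditionally on the event `E`. -/
def condIndepOn {Ω₀ : Type*} [MeasurableSpace Ω₀] (μ : Measure Ω₀) (E : Set Ω₀)
    {α β : Type*} [MeasurableSpace α] [MeasurableSpace β]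
    (X : Ω₀ → α) (Y : Ω₀ → β) : Prop :=
  ∀ (HA : Set α) (HC : Set β), MeasurableSet HA → MeasurableSet HC →
    μ[|E] (X ⁻¹' HA ∩ Y ⁻¹' HC) = μ[|E] (X ⁻¹' HA) * μ[|E] (Y ⁻¹' HC)

/-- outer independence of `Y_A` and `Y_C` relative to `Om`. -/
def OuterIndep {Ω₀ : Type} [MeasurableSpace Ω₀] (μ : Measure Ω₀)
    {α β : Type} [MeasurableSpace α] [MeasurableSpace β]
    (YA : Ω₀ → α) (YC : Ω₀ → β) (Om : Set (α × β)) : Prop :=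
  ∃ (Ω' : Type) (_ : MeasurableSpace Ω') (P : Measure Ω') (WA : Ω' → α) (WC : Ω' → β)
    (LA : Set α) (LC : Set β),
    IsProbabilityMeasure P ∧ Measurable WA ∧ Measurable WC ∧
    Om ⊆ LA ×ˢ LC ∧
    P ((fun ω => (WA ω, WC ω)) ⁻¹' (LA ×ˢ LC)) = 1 ∧
    IndepFun WA WC P ∧
    (P[|(fun ω => (WA ω, WC ω)) ⁻¹' Om]).map (fun ω => (WA ω, WC ω)) =
      μ.map (fun ω => (YA ω, YC ω))

/-- inner independence of `Y_A` and `Y_C` relative to `Om`: conditional independence given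
`{Y ∈ S_A × S_C}` for every positive-probability measurable product subset of `Om`. -/
def InnerIndep {Ω₀ : Type} [MeasurableSpace Ω₀] (μ : Measure Ω₀)
    {α β : Type} [MeasurableSpace α] [MeasurableSpace β]
    (YA : Ω₀ → α) (YC : Ω₀ → β) (Om : Set (α × β)) : Prop :=
  ∀ (SA : Set α) (SC : Set β), MeasurableSet SA → MeasurableSet SC →
    SA ×ˢ SC ⊆ Om →
    0 < μ ((fun ω => (YA ω, YC ω)) ⁻¹' (SA ×ˢ SC)) →
    condIndepOn μ ((fun ω => (YA ω, YC ω)) ⁻¹' (SA ×ˢ SC)) YA YC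

/-!
Conditioning the law of `W` first on `Om` and then on a rectangle `S_A × S_C ⊆ Om` is the same as
conditioning it on the rectangle directly. Hence `Y` conditioned on `{Y ∈ S_A × S_C}` has the law of
`W` conditioned on `{W_A ∈ S_A} ∩ {W_C ∈ S_C}`, and conditioning an independent pair on such a
rectangle event keeps it independent.
-/

namespace ProbabilityTheory

variable {Ω α β : Type*} [MeasurableSpace Ω] [MeasurableSpace α] [MeasurableSpace β]

-- Unlike `cond_cond_eq_cond_inter`, this allows a non-measurable `s`.
lemma cond_cond_of_subset {μ : Measure Ω} {s t : Set Ω} (ht : MeasurableSet t) (hts : t ⊆ s)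
    (hs : μ s ≠ ∞) : μ[|s][|t] = μ[|t] := by
  ext u hu
  rw [cond_apply' hu, cond_apply' ht, cond_apply' (ht.inter hu), cond_apply' hu,
    inter_eq_right.mpr hts, ← inter_assoc, inter_eq_right.mpr hts]
  obtain hs0 | hs0 := eq_or_ne (μ s) 0
  · have hu0 : μ (t ∩ u) = 0 := measure_mono_null (inter_subset_left.trans hts) hs0
    simp [hu0]
  · rw [ENNReal.mul_inv (.inl (ENNReal.inv_ne_zero.mpr hs)) (.inl (ENNReal.inv_ne_top.mpr hs0)),
      inv_inv]
    calc μ s * (μ t)⁻¹ * ((μ s)⁻¹ * μ (t ∩ u))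
        = μ s * (μ s)⁻¹ * ((μ t)⁻¹ * μ (t ∩ u)) := by ring
      _ = (μ t)⁻¹ * μ (t ∩ u) := by rw [ENNReal.mul_inv_cancel hs0 hs, one_mul]

lemma map_cond_preimage {μ : Measure Ω} {f : Ω → α} (hf : Measurable f) {s : Set α}
    (hs : MeasurableSet s) : (μ[|f ⁻¹' s]).map f = (μ.map f)[|s] := by
  rw [ProbabilityTheory.cond, ProbabilityTheory.cond, Measure.map_smul,
    ← Measure.restrict_map hf hs, Measure.map_apply hf hs]

lemma indepFun_iff_indepFun_map_prodMk {μ : Measure Ω} {X : Ω → α} {Y : Ω → β}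
    (hX : Measurable X) (hY : Measurable Y) :
    IndepFun X Y μ ↔ IndepFun Prod.fst Prod.snd (μ.map fun ω ↦ (X ω, Y ω)) := by
  simp only [indepFun_iff_measure_inter_preimage_eq_mul]
  refine forall₄_congr fun A B hA hB ↦ ?_
  rw [Measure.map_apply (hX.prodMk hY) ((measurable_fst hA).inter (measurable_snd hB)),
    Measure.map_apply (hX.prodMk hY) (measurable_fst hA),
    Measure.map_apply (hX.prodMk hY) (measurable_snd hB)]
  rfl

lemma IndepFun.cond_preimage_inter {μ : Measure Ω} {f : Ω → α} {g : Ω → β}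
    (hfg : IndepFun f g μ) (hf : Measurable f) (hg : Measurable g) {s : Set α} {t : Set β}
    (hs : MeasurableSet s) (ht : MeasurableSet t) :
    IndepFun f g μ[|f ⁻¹' s ∩ g ⁻¹' t] := by
  rw [indepFun_iff_measure_inter_preimage_eq_mul] at hfg ⊢
  set E := f ⁻¹' s ∩ g ⁻¹' t
  by_cases hE : μ E = ∞ ∨ μ E = 0
  · simp [cond_eq_zero.mpr hE]
  obtain ⟨hEfin, hE0⟩ := not_or.mp hE
  have hcond : ∀ A B, MeasurableSet A → MeasurableSet B →
      μ[f ⁻¹' A ∩ g ⁻¹' B | E] = (μ E)⁻¹ * (μ (f ⁻¹' (s ∩ A)) * μ (g ⁻¹' (t ∩ B))) := by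
    intro A B hA hB
    rw [cond_apply ((hf hs).inter (hg ht)), ← hfg _ _ (hs.inter hA) (ht.inter hB)]
    congr 2
    ext
    simp only [mem_inter_iff, mem_preimage]
    tauto
  intro A B hA hB
  have hcondA := hcond A univ hA .univ
  have hcondB := hcond univ B .univ hB
  rw [preimage_univ, inter_univ, inter_univ] at hcondA
  rw [preimage_univ, univ_inter, inter_univ] at hcondB
  rw [hcond A B hA hB, hcondA, hcondB]
  calc (μ E)⁻¹ * (μ (f ⁻¹' (s ∩ A)) * μ (g ⁻¹' (t ∩ B)))
      = (μ E)⁻¹ * (μ (f ⁻¹' (s ∩ A)) * μ (g ⁻¹' (t ∩ B))) * ((μ E)⁻¹ * μ E) := by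
        rw [ENNReal.inv_mul_cancel hE0 hEfin, mul_one]
    _ = _ := by rw [show μ E = μ (f ⁻¹' s) * μ (g ⁻¹' t) from hfg s t hs ht]; ring

end ProbabilityTheory

lemma condIndepOn_iff_indepFun {Ω α β : Type*} [MeasurableSpace Ω] [MeasurableSpace α]
    [MeasurableSpace β] (μ : Measure Ω) (E : Set Ω) (X : Ω → α) (Y : Ω → β) :
    condIndepOn μ E X Y ↔ IndepFun X Y μ[|E] :=
  indepFun_iff_measure_inter_preimage_eq_mul.symm

theorem stmt1_general {Ω₀ ιA ιC : Type} [MeasurableSpace Ω₀]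
    (μ : Measure Ω₀)
    (YA : Ω₀ → ιA → ℝ) (YC : Ω₀ → ιC → ℝ)
    (hA : Measurable YA) (hC : Measurable YC)
    (Om : Set ((ιA → ℝ) × (ιC → ℝ)))
    (houter : OuterIndep μ YA YC Om) :
    InnerIndep μ YA YC Om := by
  intro SA SC hSA hSC hsub _
  obtain ⟨Ω', _, P, WA, WC, -, -, _, hWA, hWC, -, -, hindep, hlaw⟩ := houter
  have hS : MeasurableSet (SA ×ˢ SC) := hSA.prod hSC
  have hW : Measurable fun ω ↦ (WA ω, WC ω) := hWA.prodMk hWC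
  have hY : Measurable fun ω ↦ (YA ω, YC ω) := hA.prodMk hC
  have hcondLaw : (μ[|(fun ω ↦ (YA ω, YC ω)) ⁻¹' (SA ×ˢ SC)]).map (fun ω ↦ (YA ω, YC ω)) =
      (P[|(fun ω ↦ (WA ω, WC ω)) ⁻¹' (SA ×ˢ SC)]).map (fun ω ↦ (WA ω, WC ω)) := by
    rw [map_cond_preimage hY hS, ← hlaw, ← map_cond_preimage hW hS,
      cond_cond_of_subset (hW hS) (preimage_mono hsub) (measure_ne_top P _)]
  rw [condIndepOn_iff_indepFun, indepFun_iff_indepFun_map_prodMk hA hC, hcondLaw,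
    ← indepFun_iff_indepFun_map_prodMk hWA hWC, mk_preimage_prod]
  exact hindep.cond_preimage_inter hWA hWC hSA hSC

/-- outer independence implies inner independence. -/
theorem stmt1 {Ω₀ ιA ιC : Type} [MeasurableSpace Ω₀]
    (μ : Measure Ω₀) [IsProbabilityMeasure μ]
    (YA : Ω₀ → ιA → ℝ) (YC : Ω₀ → ιC → ℝ)
    (hA : Measurable YA) (hC : Measurable YC)
    (Om : Set ((ιA → ℝ) × (ιC → ℝ)))
    (hsupp : ∀ᵐ ω ∂μ, (YA ω, YC ω) ∈ Om)
    (houter : OuterIndep μ YA YC Om) :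
    InnerIndep μ YA YC Om :=
  stmt1_general μ YA YC hA hC Om houter

end
end

section
/- Let W_A, W_C be random vectors taking values in L_A = L_A^1 ∪ L_A^2 and L_C = L_C^1 ∪ L_C^2 respectively, where L_k^1 = [0,1]^{|k|} and L_k^2 = [0,∞)^{|k|} \ [0,1]^{|k|}. Suppose that for all measurable H_A ⊂ L_A and H_C ⊂ L_C: (a) P(W_C ∈ H_C | W_A ∈ H_A^2) = P(W_C ∈ H_C | W_A ∈ L_A^2) whenever H_A^2 ⊂ L_A^2 has positive probability, and (b) the symmetric statement holds conditioning on W_C ∈ H_C^2 ⊂ L_C^2, and (c) P(W_A ∈ H_A^1, W_C ∈ H_C^1) = P(W_A ∈ H_A^1, W_C ∈ L_C^2)·P(W_A ∈ L_A^2, W_C ∈ H_C^1)/P(W_A ∈ L_A^2, W_C ∈ L_C^2) for all measurable H_A^1 ⊂ L_A^1, H_C^1 ⊂ L_C^1. Then for all measurable H_A^1 ⊂ L_A^1, H_C^1 ⊂ L_C^1, H_A^2 ⊂ L_A^2, H_C^2 ⊂ L_C^2 with nonzero denominators: P(W_A ∈ H_A^1, W_C ∈ H_C^1)/P(W_A ∈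 H_A^2, W_C ∈ H_C^1) = P(W_A ∈ H_A^1, W_C ∈ H_C^2)/P(W_A ∈ H_A^2, W_C ∈ H_C^2). -/
/-! Conditional independence given `{W_A ∈ L_A^2}` makes the row `H_A^2` of the block
probabilities proportional to the row `L_A^2`, and symmetrically for the column `H_C^2`; together
with the product formula on `L_A^1 × L_C^1` this turns the cross-ratio identity into a computation.
The only subtlety is that (b) is applied to the test set `L_A^2`, which is measurable only for a
countable index type; and the index type is countable as soon as `L_A^2` contains a nonempty
measurable set, since such a set depends on countably many coordinates while membership in
`[0,∞)^ι` constrains all of them. -/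

open MeasureTheory ProbabilityTheory Set
open scoped ENNReal

noncomputable section

/-- `L^1 = [0,1]^ι`. -/
def box1 (ι : Type*) : Set (ι → ℝ) := {x | ∀ i, x i ∈ Set.Icc (0:ℝ) 1}

/-- `L^2 = [0,∞)^ι \ [0,1]^ι`. -/
def box2 (ι : Type*) : Set (ι → ℝ) := {x | ∀ i, 0 ≤ x i} \ box1 ι

lemma box1_eq_Icc (ι : Type*) : box1 ι = Icc 0 1 := by
  ext x
  simp [box1, Pi.le_def, forall_and]

lemma box2_eq_Ici_diff_Icc (ι : Type*) : box2 ι = Ici 0 \ Icc 0 1 := by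
  rw [box2, box1_eq_Icc]
  rfl

lemma measurableSet_box2 (ι : Type*) [Countable ι] : MeasurableSet (box2 ι) := by
  rw [box2_eq_Ici_diff_Icc]
  exact measurableSet_Ici.diff measurableSet_Icc

lemma countable_of_measurableSet_subset_box2 {ι : Type*} {E : Set (ι → ℝ)}
    (hE : MeasurableSet E) (hne : E.Nonempty) (hsub : E ⊆ box2 ι) : Countable ι := by
  classical
  obtain ⟨I, t, hI, rfl⟩ := hE.eq_preimage_restrict_countable
  obtain ⟨x, hx⟩ := hne
  suffices hIuniv : I = univ by
    rwa [hIuniv, countable_univ_iff] at hI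
  refine eq_univ_of_forall fun j => by_contra fun hj => ?_
  have hxy : I.domRestrict (Function.update x j (-1)) = I.domRestrict x :=
    funext fun i => Function.update_of_ne (ne_of_mem_of_not_mem i.2 hj) _ _
  have hy : Function.update x j (-1) ∈ I.domRestrict ⁻¹' t := by
    rwa [mem_preimage, hxy]
  have := (hsub hy).1 j
  norm_num at this

lemma measure_inter_eq_div_mul_of_cond_eq {Ω : Type*} [MeasurableSpace Ω] {μ : Measure Ω}
    [IsFiniteMeasure μ] {s s' t : Set Ω} (ht : MeasurableSet t) (hs : μ s ≠ 0)
    (h : μ[t | s] = μ[t | s']) : μ (s ∩ t) = μ s / μ s' * μ (s' ∩ t) := by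
  rw [cond_apply' ht, cond_apply' ht] at h
  rw [div_eq_mul_inv, mul_assoc, ← h, ← mul_assoc, ENNReal.mul_inv_cancel hs (measure_ne_top μ s),
    one_mul]

lemma ENNReal.cross_mul_eq_of_proportional {α β : Type*} {p : α → β → ℝ≥0∞}
    {a a₁ a₂ : α} {c c₁ c₂ : β} {x y : ℝ≥0∞} (h0 : p a c ≠ 0) (htop : p a c ≠ ∞)
    (hrow₁ : p a₂ c₁ = x * p a c₁) (hrow₂ : p a₂ c₂ = x * p a c₂)
    (hcol₁ : p a₁ c₂ = y * p a₁ c) (hcol : p a c₂ = y * p a c)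
    (h₁₁ : p a₁ c₁ = p a₁ c * p a c₁ / p a c) :
    p a₂ c₂ * p a₁ c₁ = p a₂ c₁ * p a₁ c₂ := by
  rw [hrow₂, hcol, hcol₁, hrow₁, h₁₁]
  calc x * (y * p a c) * (p a₁ c * p a c₁ / p a c)
      = x * y * (p a₁ c * p a c₁ / p a c * p a c) := by ring
    _ = x * p a c₁ * (y * p a₁ c) := by rw [ENNReal.div_mul_cancel h0 htop]; ring

theorem stmt3_general {Ω₀ ιA ιC : Type} [MeasurableSpace Ω₀]
    (μ : Measure Ω₀) [IsProbabilityMeasure μ]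
    (WA : Ω₀ → ιA → ℝ) (WC : Ω₀ → ιC → ℝ)
    (hWA : Measurable WA) (hWC : Measurable WC)
    -- all four block probabilities are positive
    (h22 : 0 < μ (WA ⁻¹' box2 ιA ∩ WC ⁻¹' box2 ιC))
    -- (a) conditioning on a positive-probability subset of {W_A ∈ L_A^2} is the same as
    -- conditioning on {W_A ∈ L_A^2}
    (ha : ∀ HA2 : Set (ιA → ℝ), MeasurableSet HA2 → HA2 ⊆ box2 ιA →
      μ (WA ⁻¹' HA2) ≠ 0 →
      ∀ HC : Set (ιC → ℝ), MeasurableSet HC →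
        μ[|WA ⁻¹' HA2] (WC ⁻¹' HC) = μ[|WA ⁻¹' box2 ιA] (WC ⁻¹' HC))
    -- (b) symmetrically, conditioning on a positive-probability subset of {W_C ∈ L_C^2}
    (hb : ∀ HC2 : Set (ιC → ℝ), MeasurableSet HC2 → HC2 ⊆ box2 ιC →
      μ (WC ⁻¹' HC2) ≠ 0 →
      ∀ HA : Set (ιA → ℝ), MeasurableSet HA →
        μ[|WC ⁻¹' HC2] (WA ⁻¹' HA) = μ[|WC ⁻¹' box2 ιC] (WA ⁻¹' HA))
    -- (c) the product formula on L_A^1 × L_C^1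
    (hc : ∀ (HA1 : Set (ιA → ℝ)) (HC1 : Set (ιC → ℝ)),
      MeasurableSet HA1 → MeasurableSet HC1 → HA1 ⊆ box1 ιA → HC1 ⊆ box1 ιC →
      μ (WA ⁻¹' HA1 ∩ WC ⁻¹' HC1) =
        μ (WA ⁻¹' HA1 ∩ WC ⁻¹' box2 ιC) * μ (WA ⁻¹' box2 ιA ∩ WC ⁻¹' HC1) /
          μ (WA ⁻¹' box2 ιA ∩ WC ⁻¹' box2 ιC)) :
    ∀ (HA1 HA2 : Set (ιA → ℝ)) (HC1 HC2 : Set (ιC → ℝ)),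
      MeasurableSet HA1 → MeasurableSet HA2 → MeasurableSet HC1 → MeasurableSet HC2 →
      HA1 ⊆ box1 ιA → HA2 ⊆ box2 ιA → HC1 ⊆ box1 ιC → HC2 ⊆ box2 ιC →
      μ (WA ⁻¹' HA2 ∩ WC ⁻¹' HC1) ≠ 0 → μ (WA ⁻¹' HA2 ∩ WC ⁻¹' HC2) ≠ 0 →
      μ (WA ⁻¹' HA1 ∩ WC ⁻¹' HC1) / μ (WA ⁻¹' HA2 ∩ WC ⁻¹' HC1) =
        μ (WA ⁻¹' HA1 ∩ WC ⁻¹' HC2) / μ (WA ⁻¹' HA2 ∩ WC ⁻¹' HC2) := by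
  intro HA1 HA2 HC1 HC2 mA1 mA2 mC1 mC2 sA1 sA2 sC1 sC2 hne21 hne22
  have hA2 : μ (WA ⁻¹' HA2) ≠ 0 := fun h => hne22 (measure_mono_null inter_subset_left h)
  have hC2 : μ (WC ⁻¹' HC2) ≠ 0 := fun h => hne22 (measure_mono_null inter_subset_right h)
  obtain ⟨ω, hωA, -⟩ := nonempty_of_measure_ne_zero hne22
  have : Countable ιA := countable_of_measurableSet_subset_box2 mA2 ⟨_, hωA⟩ sA2
  have hrow : ∀ T, MeasurableSet T → μ (WA ⁻¹' HA2 ∩ WC ⁻¹' T) =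
      μ (WA ⁻¹' HA2) / μ (WA ⁻¹' box2 ιA) * μ (WA ⁻¹' box2 ιA ∩ WC ⁻¹' T) := fun T hT =>
    measure_inter_eq_div_mul_of_cond_eq (hWC hT) hA2 (ha HA2 mA2 sA2 hA2 T hT)
  have hcol : ∀ T, MeasurableSet T → μ (WA ⁻¹' T ∩ WC ⁻¹' HC2) =
      μ (WC ⁻¹' HC2) / μ (WC ⁻¹' box2 ιC) * μ (WA ⁻¹' T ∩ WC ⁻¹' box2 ιC) := fun T hT => by
    simpa only [inter_comm (WA ⁻¹' T)] using
      measure_inter_eq_div_mul_of_cond_eq (hWA hT) hC2 (hb HC2 mC2 sC2 hC2 T hT)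
  rw [ENNReal.div_eq_div_iff hne22 (measure_ne_top _ _) hne21 (measure_ne_top _ _)]
  exact ENNReal.cross_mul_eq_of_proportional (p := fun A C => μ (WA ⁻¹' A ∩ WC ⁻¹' C))
    h22.ne' (measure_ne_top _ _) (hrow HC1 mC1) (hrow HC2 mC2) (hcol HA1 mA1)
    (hcol _ (measurableSet_box2 ιA)) (hc HA1 HC1 mA1 mC1 sA1 sC1)

/-- under conditional independence of `W_A, W_C` given `{W_A ∈ L_A^2}` and given
`{W_C ∈ L_C^2}`, and the product/ratio definition of the joint probability on `L_A^1 × L_C^1`,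
the cross-ratio consistency identity holds. -/
theorem stmt3 {Ω₀ ιA ιC : Type} [MeasurableSpace Ω₀]
    (μ : Measure Ω₀) [IsProbabilityMeasure μ]
    (WA : Ω₀ → ιA → ℝ) (WC : Ω₀ → ιC → ℝ)
    (hWA : Measurable WA) (hWC : Measurable WC)
    -- all four block probabilities are positive
    (h11 : 0 < μ (WA ⁻¹' box1 ιA ∩ WC ⁻¹' box1 ιC))
    (h12 : 0 < μ (WA ⁻¹' box1 ιA ∩ WC ⁻¹' box2 ιC))
    (h21 : 0 < μ (WA ⁻¹' box2 ιA ∩ WC ⁻¹' box1 ιC))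
    (h22 : 0 < μ (WA ⁻¹' box2 ιA ∩ WC ⁻¹' box2 ιC))
    -- (a) conditioning on a positive-probability subset of {W_A ∈ L_A^2} is the same as
    -- conditioning on {W_A ∈ L_A^2}
    (ha : ∀ HA2 : Set (ιA → ℝ), MeasurableSet HA2 → HA2 ⊆ box2 ιA →
      μ (WA ⁻¹' HA2) ≠ 0 →
      ∀ HC : Set (ιC → ℝ), MeasurableSet HC →
        μ[|WA ⁻¹' HA2] (WC ⁻¹' HC) = μ[|WA ⁻¹' box2 ιA] (WC ⁻¹' HC))
    -- (b) symmetrically, conditioning on a positive-probability subset of {W_C ∈ L_C^2}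
    (hb : ∀ HC2 : Set (ιC → ℝ), MeasurableSet HC2 → HC2 ⊆ box2 ιC →
      μ (WC ⁻¹' HC2) ≠ 0 →
      ∀ HA : Set (ιA → ℝ), MeasurableSet HA →
        μ[|WC ⁻¹' HC2] (WA ⁻¹' HA) = μ[|WC ⁻¹' box2 ιC] (WA ⁻¹' HA))
    -- (c) the product formula on L_A^1 × L_C^1
    (hc : ∀ (HA1 : Set (ιA → ℝ)) (HC1 : Set (ιC → ℝ)),
      MeasurableSet HA1 → MeasurableSet HC1 → HA1 ⊆ box1 ιA → HC1 ⊆ box1 ιC →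
      μ (WA ⁻¹' HA1 ∩ WC ⁻¹' HC1) =
        μ (WA ⁻¹' HA1 ∩ WC ⁻¹' box2 ιC) * μ (WA ⁻¹' box2 ιA ∩ WC ⁻¹' HC1) /
          μ (WA ⁻¹' box2 ιA ∩ WC ⁻¹' box2 ιC)) :
    ∀ (HA1 HA2 : Set (ιA → ℝ)) (HC1 HC2 : Set (ιC → ℝ)),
      MeasurableSet HA1 → MeasurableSet HA2 → MeasurableSet HC1 → MeasurableSet HC2 →
      HA1 ⊆ box1 ιA → HA2 ⊆ box2 ιA → HC1 ⊆ box1 ιC → HC2 ⊆ box2 ιC →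
      μ (WA ⁻¹' HA2 ∩ WC ⁻¹' HC1) ≠ 0 → μ (WA ⁻¹' HA2 ∩ WC ⁻¹' HC2) ≠ 0 →
      μ (WA ⁻¹' HA1 ∩ WC ⁻¹' HC1) / μ (WA ⁻¹' HA2 ∩ WC ⁻¹' HC1) =
        μ (WA ⁻¹' HA1 ∩ WC ⁻¹' HC2) / μ (WA ⁻¹' HA2 ∩ WC ⁻¹' HC2) :=
  stmt3_general μ WA WC hWA hWC h22 ha hb hc

end
end

section
/- For Ω = [0,∞)^d \ [0,1]^d and B = ∅, the three notions of independence coincide: Y_A ⫫_o Y_C ⟺ Y_A ⫫_i Y_C ⟺ Y_A ⫫_e Y_C, with no distributional assumptions on Y beyond its support being Ω. -/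
open MeasureTheory ProbabilityTheory Set
open scoped ENNReal

noncomputable section

/-- The Engelke–Hitz region `Ω = [0,∞)^d \ [0,1]^d`. -/
def omEH (ιA ιC : Type*) : Set ((ιA → ℝ) × (ιC → ℝ)) :=
  {p | (∀ i, 0 ≤ p.1 i) ∧ (∀ j, 0 ≤ p.2 j)} \ {p | p.1 ∈ box1 ιA ∧ p.2 ∈ box1 ιC}

/-- the topological support of `ν` is `S`: `S` carries all the mass and every open set
meeting `S` has positive mass. -/
def HasSupport {γ : Type*} [MeasurableSpace γ] [TopologicalSpace γ]
    (ν : Measure γ) (S : Set γ) : Prop :=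
  ν Sᶜ = 0 ∧ ∀ U : Set γ, IsOpen U → (U ∩ S).Nonempty → 0 < ν U

/-- Engelke–Hitz extremal independence: `Y_A ⫫ Y_C` given `{Y_k > 1}` for every `k`. -/
def EHIndep {Ω₀ : Type} [MeasurableSpace Ω₀] (μ : Measure Ω₀) {ιA ιC : Type}
    (YA : Ω₀ → ιA → ℝ) (YC : Ω₀ → ιC → ℝ) : Prop :=
  (∀ k : ιA, condIndepOn μ {ω | 1 < YA ω k} YA YC) ∧
  (∀ k : ιC, condIndepOn μ {ω | 1 < YC ω k} YA YC)

/-!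
All three notions depend only on the law `ν` of `(Y_A, Y_C)`. Outer independence makes `ν` a
multiple of a product measure on every rectangle inside `Ω`, which gives inner independence; and
`{Y_k > 1}` differs by a null set from `{Y_k > 1} ∩ Ω`, a rectangle inside `Ω`, which gives
Engelke–Hitz independence.

Conversely, for `k ∈ A` the events `{Y_k > 1}` overlap pairwise with positive mass (support
assumption), so the conditional laws of `Y_C` given them coincide and, by countable additivity,
`ν` is a product on `U_A × ℝ^C`, `U_A = {∃ k, x_k > 1}`; symmetrically on `ℝ^A × U_C`. Hence
`ν (· ×ˢ U_C) ⊗ ν (U_A ×ˢ ·)` equals `ν (U_A ×ˢ U_C) • ν` on `U_A × ℝ^C ∪ ℝ^A × U_C ⊇ Ω`, and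
normalising its two factors gives the outer representation.
-/

theorem MeasurableSet.exists_countable_dependsOn {ι : Type*} {π : ι → Type*}
    [m : ∀ i, MeasurableSpace (π i)] {S : Set (∀ i, π i)} (hS : MeasurableSet S) :
    ∃ J : Set ι, J.Countable ∧ ∀ x y : ∀ i, π i, (∀ i ∈ J, x i = y i) → (x ∈ S ↔ y ∈ S) := by
  have h : MeasurableSet[⨆ i, (m i).comap fun x => x i] S := hS
  rw [MeasurableSpace.measurableSet_iSup] at h
  clear hS
  induction h with
  | basic u hu =>
    obtain ⟨i, t, -, rfl⟩ := hu
    exact ⟨{i}, countable_singleton i, fun x y hxy => by rw [mem_preimage, mem_preimage, hxy i rfl]⟩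
  | empty => exact ⟨∅, countable_empty, fun _ _ _ => Iff.rfl⟩
  | compl t _ ih =>
    obtain ⟨J, hJ, hdep⟩ := ih
    exact ⟨J, hJ, fun x y hxy => not_congr (hdep x y hxy)⟩
  | iUnion f _ ih =>
    choose J hJ hdep using ih
    refine ⟨⋃ n, J n, countable_iUnion hJ, fun x y hxy => ?_⟩
    simp only [mem_iUnion]
    exact exists_congr fun n => hdep n x y fun i hi => hxy i (mem_iUnion.2 ⟨n, hi⟩)

/-- The product σ-algebra only sees countably many coordinates, so inside a measurable set of
positive measure the constraint on any other coordinate can be violated. -/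
theorem countable_of_measure_compl_setOf_nonneg_eq_zero {ι β : Type*} [MeasurableSpace β]
    (ν : Measure ((ι → ℝ) × β)) [NeZero ν] (h : ν {p | ∀ i, 0 ≤ p.1 i}ᶜ = 0) : Countable ι := by
  classical
  by_contra hι
  obtain ⟨N, hsub, hN, hN0⟩ := exists_measurable_superset_of_null h
  obtain ⟨p, hp⟩ : (Nᶜ).Nonempty := by
    rw [nonempty_compl]
    rintro rfl
    exact NeZero.ne ν (Measure.measure_univ_eq_zero.1 hN0)
  obtain ⟨J, hJ, hdep⟩ :=
    (measurable_id.prodMk measurable_const hN.compl : MeasurableSet {x | (x, p.2) ∈ Nᶜ})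
      |>.exists_countable_dependsOn
  obtain ⟨i, hi⟩ : ∃ i, i ∉ J := by
    by_contra! hJ'
    exact hι (countable_univ_iff.1 (eq_univ_of_forall hJ' ▸ hJ))
  have hupd : (Function.update p.1 i (-1), p.2) ∈ Nᶜ :=
    (hdep p.1 _ fun j hj => (Function.update_of_ne (ne_of_mem_of_not_mem hj hi) _ _).symm).1 hp
  have h0 : (0 : ℝ) ≤ Function.update p.1 i (-1) i := not_not.1 (mt (@hsub _) hupd) i
  norm_num at h0

theorem HasSupport.countable {ιA ιC : Type*} {ν : Measure ((ιA → ℝ) × (ιC → ℝ))}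
    [IsProbabilityMeasure ν] (h : HasSupport ν (omEH ιA ιC)) : Countable ιA ∧ Countable ιC := by
  constructor
  · refine countable_of_measure_compl_setOf_nonneg_eq_zero ν (measure_mono_null ?_ h.1)
    exact compl_subset_compl.2 fun p hp => hp.1.1
  · have := Measure.isProbabilityMeasure_map (μ := ν)
      MeasurableEquiv.prodComm.measurable.aemeasurable
    refine countable_of_measure_compl_setOf_nonneg_eq_zero (ν.map MeasurableEquiv.prodComm) ?_
    rw [MeasurableEquiv.map_apply]
    exact measure_mono_null (compl_subset_compl.2 fun p hp => hp.1.2) h.1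

theorem HasSupport.measure_ne_zero {ιA ιC : Type*} [Nonempty ιA]
    {ν : Measure ((ιA → ℝ) × (ιC → ℝ))} (h : HasSupport ν (omEH ιA ιC))
    {U : Set ((ιA → ℝ) × (ιC → ℝ))} (hU : IsOpen U)
    (h2 : ((fun _ => 2, fun _ => 2) : (ιA → ℝ) × (ιC → ℝ)) ∈ U) : ν U ≠ 0 := by
  refine (h.2 U hU ⟨_, h2, ⟨fun _ => zero_le_two, fun _ => zero_le_two⟩, fun hbox => ?_⟩).ne'
  obtain ⟨i⟩ := ‹Nonempty ιA›
  have := (hbox.1 i).2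
  norm_num at this

theorem measurableSet_setOf_nonneg {ι : Type*} [Countable ι] :
    MeasurableSet {x : ι → ℝ | ∀ i, 0 ≤ x i} := by
  measurability

section CondIndep

variable {Ω₀ γ α β : Type*} [MeasurableSpace Ω₀] [MeasurableSpace γ]
  [MeasurableSpace α] [MeasurableSpace β]

theorem cond_congr_ae {μ : Measure Ω₀} {s t : Set Ω₀} (h : s =ᵐ[μ] t) : μ[|s] = μ[|t] := by
  rw [ProbabilityTheory.cond, ProbabilityTheory.cond, measure_congr h, Measure.restrict_congr_set h]

theorem cond_eq_of_restrict_eq_smul {μ ν : Measure Ω₀} [IsProbabilityMeasure ν] {s : Set Ω₀}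
    {c : ℝ≥0∞} (h : μ.restrict s = c • ν) (hc₀ : c ≠ 0) (hc : c ≠ ∞) : μ[|s] = ν := by
  have hs : μ s = c := by rw [← Measure.restrict_apply_univ, h]; simp
  rw [ProbabilityTheory.cond, hs, h, smul_smul, ENNReal.inv_mul_cancel hc₀ hc, one_smul]

theorem cond_map_apply (μ : Measure Ω₀) {Y : Ω₀ → γ} (hY : Measurable Y) {E t : Set γ}
    (hE : MeasurableSet E) (ht : MeasurableSet t) :
    (μ.map Y)[|E] t = μ[|Y ⁻¹' E] (Y ⁻¹' t) := by
  rw [cond_apply hE, cond_apply (hY hE), Measure.map_apply hY hE,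
    Measure.map_apply hY (hE.inter ht), preimage_inter]

theorem condIndepOn_of_measure_eq_zero {μ : Measure Ω₀} {E : Set Ω₀} (hE : μ E = 0)
    (X : Ω₀ → α) (Y : Ω₀ → β) : condIndepOn μ E X Y := by
  intro HA HC _ _
  simp [cond_eq_zero_of_meas_eq_zero hE]

theorem condIndepOn_comm {μ : Measure Ω₀} {E : Set Ω₀} {X : Ω₀ → α} {Y : Ω₀ → β} :
    condIndepOn μ E X Y ↔ condIndepOn μ E Y X :=
  ⟨fun h HC HA hHC hHA => by rw [inter_comm, mul_comm]; exact h HA HC hHA hHC,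
    fun h HA HC hHA hHC => by rw [inter_comm, mul_comm]; exact h HC HA hHC hHA⟩

theorem condIndepOn_map_iff (μ : Measure Ω₀) {Y : Ω₀ → γ} (hY : Measurable Y) {f : γ → α}
    {g : γ → β} (hf : Measurable f) (hg : Measurable g) {E : Set γ} (hE : MeasurableSet E) :
    condIndepOn (μ.map Y) E f g ↔ condIndepOn μ (Y ⁻¹' E) (f ∘ Y) (g ∘ Y) := by
  refine forall₂_congr fun HA HC => forall₂_congr fun hHA hHC => ?_
  rw [cond_map_apply μ hY hE ((hf hHA).inter (hg hHC)), cond_map_apply μ hY hE (hf hHA),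
    cond_map_apply μ hY hE (hg hHC)]
  rfl

theorem ENNReal.inv_mul_eq_inv_mul_mul_inv_mul_iff {w a b c : ℝ≥0∞} (hw₀ : w ≠ 0) (hw : w ≠ ∞) :
    w⁻¹ * a = w⁻¹ * b * (w⁻¹ * c) ↔ a * w = b * c := by
  have hww : w * w⁻¹ = 1 := ENNReal.mul_inv_cancel hw₀ hw
  rw [← ENNReal.mul_right_inj (mul_ne_zero hw₀ hw₀) (ENNReal.mul_ne_top hw hw),
    show w * w * (w⁻¹ * a) = w * w⁻¹ * (a * w) by ring,
    show w * w * (w⁻¹ * b * (w⁻¹ * c)) = w * w⁻¹ * (w * w⁻¹) * (b * c) by ring,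
    hww, one_mul, one_mul, one_mul]

theorem condIndepOn_prod_iff {ν : Measure (α × β)} [IsFiniteMeasure ν] {SA : Set α} {SC : Set β}
    (hSA : MeasurableSet SA) (hSC : MeasurableSet SC) :
    condIndepOn ν (SA ×ˢ SC) Prod.fst Prod.snd ↔
      ∀ ⦃TA TC⦄, MeasurableSet TA → MeasurableSet TC → TA ⊆ SA → TC ⊆ SC →
        ν (TA ×ˢ TC) * ν (SA ×ˢ SC) = ν (TA ×ˢ SC) * ν (SA ×ˢ TC) := by
  by_cases h₀ : ν (SA ×ˢ SC) = 0
  · refine ⟨fun _ TA TC _ _ hA _ => ?_, fun _ => condIndepOn_of_measure_eq_zero h₀ _ _⟩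
    rw [h₀, measure_mono_null (prod_mono hA subset_rfl) h₀]
    simp
  have hcond : ∀ HA HC, ν[|SA ×ˢ SC] (HA ×ˢ HC) = (ν (SA ×ˢ SC))⁻¹ * ν ((SA ∩ HA) ×ˢ (SC ∩ HC)) :=
    fun HA HC => by rw [cond_apply (hSA.prod hSC), prod_inter_prod]
  simp_rw [condIndepOn, ← prod_eq, ← prod_univ, ← univ_prod, hcond, inter_univ,
    ENNReal.inv_mul_eq_inv_mul_mul_inv_mul_iff h₀ (measure_ne_top _ _)]
  refine ⟨fun h TA TC hTA hTC hA hC => ?_, fun h HA HC hHA hHC =>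
    h (hSA.inter hHA) (hSC.inter hHC) inter_subset_left inter_subset_left⟩
  simpa [inter_eq_right.2 hA, inter_eq_right.2 hC] using h TA TC hTA hTC

end CondIndep

theorem prod_inter_union_prod {α β : Type*} {T SA : Set α} {C SC : Set β} :
    T ×ˢ C ∩ (SA ×ˢ univ ∪ univ ×ˢ SC) = (T ∩ SA) ×ˢ C ∪ (T \ SA) ×ˢ (C ∩ SC) := by
  ext ⟨x, y⟩
  simp only [mem_inter_iff, mem_prod, mem_union, mem_univ, mem_sdiff]
  tauto

section MarginalProd

variable {α β : Type*} [MeasurableSpace α] [MeasurableSpace β]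

def IsMarginalProdOn (ν : Measure (α × β)) (S : Set α) (g : Set β → ℝ≥0∞) : Prop :=
  ∀ ⦃T C⦄, MeasurableSet T → MeasurableSet C → T ⊆ S → ν (T ×ˢ C) = ν (T ×ˢ univ) * g C

variable {ν : Measure (α × β)}

theorem isMarginalProdOn_of_condIndepOn [IsFiniteMeasure ν] {S : Set α} (hS : MeasurableSet S)
    (hS₀ : ν (S ×ˢ univ) ≠ 0) (h : condIndepOn ν (Prod.fst ⁻¹' S) Prod.fst Prod.snd) :
    IsMarginalProdOn ν S fun C => (ν (S ×ˢ univ))⁻¹ * ν (S ×ˢ C) := by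
  rw [← prod_univ, condIndepOn_prod_iff hS .univ] at h
  intro T C hT hC hTS
  rw [mul_left_comm, ← h hT hC hTS (subset_univ C), mul_comm]
  exact (ENNReal.mul_div_cancel_right hS₀ (measure_ne_top _ _)).symm

theorem IsMarginalProdOn.eq_of_inter [IsFiniteMeasure ν] {S S' : Set α} {g g' : Set β → ℝ≥0∞}
    (h : IsMarginalProdOn ν S g) (h' : IsMarginalProdOn ν S' g') (hSS' : MeasurableSet (S ∩ S'))
    (h₀ : ν ((S ∩ S') ×ˢ univ) ≠ 0) {C : Set β} (hC : MeasurableSet C) : g C = g' C := by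
  have := (h hSS' hC inter_subset_left).symm.trans (h' hSS' hC inter_subset_right)
  exact (ENNReal.mul_right_inj h₀ (measure_ne_top _ _)).1 this

theorem IsMarginalProdOn.iUnion {ι : Type*} [Countable ι] [Nonempty ι] {e : ι → Set α}
    {g : Set β → ℝ≥0∞} (he : ∀ k, MeasurableSet (e k)) (h : ∀ k, IsMarginalProdOn ν (e k) g) :
    IsMarginalProdOn ν (⋃ k, e k) g := by
  intro T C hT hC hTe
  obtain ⟨f, hf⟩ := exists_surjective_nat ι
  set d := disjointed fun n => T ∩ e (f n)
  have hd : ∀ n, MeasurableSet (d n) := .disjointed fun n => hT.inter (he (f n))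
  have hdT : ⋃ n, d n = T := by
    rw [iUnion_disjointed, ← inter_iUnion, hf.iUnion_comp e, inter_eq_left.2 hTe]
  have hsum : ∀ D, MeasurableSet D → ν (T ×ˢ D) = ∑' n, ν (d n ×ˢ D) := fun D hD => by
    rw [← hdT, iUnion_prod_const, measure_iUnion (fun i j hij =>
      (disjoint_disjointed _ hij).set_prod_left _ _) fun n => (hd n).prod hD]
  rw [hsum C hC, hsum univ .univ, ← ENNReal.tsum_mul_right]
  exact tsum_congr fun n => h (f n) (hd n) hC ((disjointed_subset _ n).trans inter_subset_right)

/-- The overlaps force the conditional laws of `p.2` given the events `{p.1 ∈ e k}` to coincide. -/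
theorem exists_isMarginalProdOn_iUnion [IsFiniteMeasure ν] {ι : Type*} [Countable ι] [Nonempty ι]
    {e : ι → Set α} (he : ∀ k, MeasurableSet (e k)) (h₀ : ∀ k j, ν ((e k ∩ e j) ×ˢ univ) ≠ 0)
    (h : ∀ k, condIndepOn ν (Prod.fst ⁻¹' e k) Prod.fst Prod.snd) :
    ∃ g, IsMarginalProdOn ν (⋃ k, e k) g := by
  obtain ⟨k₀⟩ := ‹Nonempty ι›
  have hk : ∀ k, IsMarginalProdOn ν (e k) fun C => (ν (e k ×ˢ univ))⁻¹ * ν (e k ×ˢ C) :=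
    fun k => isMarginalProdOn_of_condIndepOn (he k) (by simpa using h₀ k k) (h k)
  refine ⟨fun C => (ν (e k₀ ×ˢ univ))⁻¹ * ν (e k₀ ×ˢ C),
    IsMarginalProdOn.iUnion he fun k T C hT hC hTe => ?_⟩
  rw [hk k hT hC hTe]
  exact congrArg (ν (T ×ˢ univ) * ·)
    ((hk k).eq_of_inter (hk k₀) ((he k).inter (he k₀)) (h₀ k k₀) hC)

theorem IsMarginalProdOn.cross_mul_eq {S : Set α} {g : Set β → ℝ≥0∞}
    (h : IsMarginalProdOn ν S g) (hS : MeasurableSet S) {T : Set α} (hT : MeasurableSet T)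
    (hTS : T ⊆ S) {C D : Set β} (hC : MeasurableSet C) (hD : MeasurableSet D) :
    ν (T ×ˢ C) * ν (S ×ˢ D) = ν (T ×ˢ D) * ν (S ×ˢ C) := by
  rw [h hT hC hTS, h hS hD subset_rfl, h hT hD hTS, h hS hC subset_rfl]
  ring

theorem map_swap_prod_apply (ν : Measure (α × β)) {T : Set α} {C : Set β}
    (hT : MeasurableSet T) (hC : MeasurableSet C) : ν.map Prod.swap (C ×ˢ T) = ν (T ×ˢ C) := by
  rw [Measure.map_apply measurable_swap (hC.prod hT), preimage_swap_prod]

theorem prod_restrict_union_eq_smul [IsFiniteMeasure ν] {SA : Set α} {SC : Set β}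
    {gA : Set β → ℝ≥0∞} {gC : Set α → ℝ≥0∞} (hSA : MeasurableSet SA) (hSC : MeasurableSet SC)
    (hνA : IsMarginalProdOn ν SA gA) (hνC : IsMarginalProdOn (ν.map Prod.swap) SC gC) :
    (((ν.restrict (univ ×ˢ SC)).map Prod.fst).prod
        ((ν.restrict (SA ×ˢ univ)).map Prod.snd)).restrict (SA ×ˢ univ ∪ univ ×ˢ SC) =
      ν (SA ×ˢ SC) • ν.restrict (SA ×ˢ univ ∪ univ ×ˢ SC) := by
  have hα : ∀ T, MeasurableSet T → (ν.restrict (univ ×ˢ SC)).map Prod.fst T = ν (T ×ˢ SC) :=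
    fun T hT => by
      rw [Measure.map_apply measurable_fst hT, Measure.restrict_apply (measurable_fst hT),
        univ_prod, ← prod_eq]
  have hγ : ∀ C, MeasurableSet C → (ν.restrict (SA ×ˢ univ)).map Prod.snd C = ν (SA ×ˢ C) :=
    fun C hC => by
      rw [Measure.map_apply measurable_snd hC, Measure.restrict_apply (measurable_snd hC),
        prod_univ, inter_comm, ← prod_eq]
  have hprod : ∀ T C, MeasurableSet T → MeasurableSet C → T ⊆ SA ∨ C ⊆ SC →
      ν (T ×ˢ SC) * ν (SA ×ˢ C) = ν (SA ×ˢ SC) * ν (T ×ˢ C) := by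
    rintro T C hT hC (hTS | hCS)
    · rw [hνA.cross_mul_eq hSA hT hTS hSC hC, mul_comm]
    · have := hνC.cross_mul_eq hSC hC hCS hT hSA
      rw [map_swap_prod_apply ν hT hC, map_swap_prod_apply ν hSA hSC, map_swap_prod_apply ν hSA hC,
        map_swap_prod_apply ν hT hSC] at this
      rw [mul_comm, ← this, mul_comm]
  refine Measure.ext_prod fun {T C} hT hC => ?_
  have hdisj : Disjoint ((T ∩ SA) ×ˢ C) ((T \ SA) ×ˢ (C ∩ SC)) :=
    disjoint_sdiff_inter.symm.set_prod_left _ _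
  have hmeas : MeasurableSet ((T \ SA) ×ˢ (C ∩ SC)) := (hT.diff hSA).prod (hC.inter hSC)
  rw [Measure.smul_apply, Measure.restrict_apply (hT.prod hC), Measure.restrict_apply (hT.prod hC),
    prod_inter_union_prod, measure_union hdisj hmeas, measure_union hdisj hmeas,
    Measure.prod_prod, Measure.prod_prod,
    hα _ (hT.inter hSA), hγ _ hC, hα _ (hT.diff hSA), hγ _ (hC.inter hSC),
    hprod _ _ (hT.inter hSA) hC (.inl inter_subset_right),
    hprod _ _ (hT.diff hSA) (hC.inter hSC) (.inr inter_subset_right), smul_eq_mul, mul_add]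

end MarginalProd

section Independence

variable {α β : Type} [MeasurableSpace α] [MeasurableSpace β]

theorem outerIndep_of_prod_restrict_eq_smul {ν : Measure (α × β)} [IsProbabilityMeasure ν]
    {Om : Set (α × β)} {a : Measure α} {g : Measure β} [IsFiniteMeasure a] [IsFiniteMeasure g]
    {c : ℝ≥0∞} (h : (a.prod g).restrict Om = c • ν) (hc₀ : c ≠ 0) (hc : c ≠ ∞) :
    OuterIndep ν Prod.fst Prod.snd Om := by
  have hag : a univ * g univ ≠ 0 := by
    intro h0
    apply hc₀
    have hOm : (a.prod g) Om = c := by simpa using congrArg (· univ) h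
    rw [← hOm]
    exact measure_mono_null (subset_univ _) (by rw [← univ_prod_univ, Measure.prod_prod, h0])
  have ha : IsProbabilityMeasure ((a univ)⁻¹ • a) :=
    ⟨by simp [ENNReal.inv_mul_cancel (left_ne_zero_of_mul hag) (measure_ne_top a _)]⟩
  have hg : IsProbabilityMeasure ((g univ)⁻¹ • g) :=
    ⟨by simp [ENNReal.inv_mul_cancel (right_ne_zero_of_mul hag) (measure_ne_top g _)]⟩
  refine ⟨α × β, inferInstance, ((a univ)⁻¹ • a).prod ((g univ)⁻¹ • g), Prod.fst, Prod.snd,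
    univ, univ, inferInstance, measurable_fst, measurable_snd, by simp, by simp,
    indepFun_prod (X := id) (Y := id) measurable_id measurable_id, ?_⟩
  simp only [Prod.mk.eta, preimage_id', Measure.map_id']
  refine cond_eq_of_restrict_eq_smul (c := (a univ)⁻¹ * (g univ)⁻¹ * c) ?_ ?_ ?_
  · rw [Measure.prod_smul_left, Measure.prod_smul_right, Measure.restrict_smul,
      Measure.restrict_smul, h, smul_smul, smul_smul, mul_assoc]
  · simp [hc₀, measure_ne_top]
  · simp [ENNReal.mul_eq_top, hc, left_ne_zero_of_mul hag, right_ne_zero_of_mul hag]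

theorem innerIndep_of_outerIndep (ν : Measure (α × β)) [IsFiniteMeasure ν] (Om : Set (α × β))
    (h : OuterIndep ν Prod.fst Prod.snd Om) : InnerIndep ν Prod.fst Prod.snd Om := by
  obtain ⟨Ω', _, P, WA, WC, -, -, -, hWA, hWC, -, -, hind, hlaw⟩ := h
  simp only [Prod.mk.eta, Measure.map_id'] at hlaw
  have hrect : ∀ ⦃TA TC⦄, MeasurableSet TA → MeasurableSet TC → TA ×ˢ TC ⊆ Om →
      ν (TA ×ˢ TC) = (P ((fun ω => (WA ω, WC ω)) ⁻¹' Om))⁻¹ * (P (WA ⁻¹' TA) * P (WC ⁻¹' TC)) := by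
    intro TA TC hTA hTC hsub
    rw [← hlaw, Measure.map_apply (hWA.prodMk hWC) (hTA.prod hTC), cond_apply' ((hWA.prodMk hWC)
      (hTA.prod hTC)), inter_eq_right.2 (preimage_mono hsub), mk_preimage_prod,
      hind.measure_inter_preimage_eq_mul _ _ hTA hTC]
  intro SA SC hSA hSC hsub _
  refine (condIndepOn_prod_iff hSA hSC).2 fun TA TC hTA hTC hA hC => ?_
  rw [hrect hTA hTC ((prod_mono hA hC).trans hsub), hrect hSA hSC hsub,
    hrect hTA hSC ((prod_mono hA subset_rfl).trans hsub),
    hrect hSA hTC ((prod_mono subset_rfl hC).trans hsub)]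
  ring

theorem InnerIndep.condIndepOn_of_inter_eq_prod {ν : Measure (α × β)} {Om : Set (α × β)}
    (h : InnerIndep ν Prod.fst Prod.snd Om) (hOm : ν Omᶜ = 0) {E : Set (α × β)} {RA : Set α}
    {RC : Set β} (hRA : MeasurableSet RA) (hRC : MeasurableSet RC) (hE : E ∩ Om = RA ×ˢ RC) :
    condIndepOn ν E Prod.fst Prod.snd := by
  have hcond : ν[|E] = ν[|RA ×ˢ RC] :=
    hE ▸ (cond_congr_ae (inter_ae_eq_left_of_ae_eq_univ (ae_eq_univ.2 hOm))).symm
  unfold condIndepOn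
  rw [hcond]
  by_cases h₀ : ν (RA ×ˢ RC) = 0
  · exact condIndepOn_of_measure_eq_zero h₀ _ _
  · exact h RA RC hRA hRC (hE ▸ inter_subset_right) (pos_iff_ne_zero.2 h₀)

end Independence

section Orthant

variable {ιA ιC : Type}

theorem mem_box1_iff {ι : Type*} {x : ι → ℝ} (hx : ∀ i, 0 ≤ x i) :
    x ∈ box1 ι ↔ ¬∃ k, 1 < x k := by
  simp [box1, hx]

theorem omEH_eq_inter : omEH ιA ιC = {x | ∀ i, 0 ≤ x i} ×ˢ {y | ∀ j, 0 ≤ y j} ∩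
    ((⋃ k, {x : ιA → ℝ | 1 < x k}) ×ˢ univ ∪ univ ×ˢ ⋃ k, {y : ιC → ℝ | 1 < y k}) := by
  ext ⟨x, y⟩
  simp only [omEH, mem_sdiff, mem_inter_iff, mem_prod, mem_ofPred_eq, mem_union, mem_iUnion,
    mem_univ, and_true, true_and]
  constructor <;> rintro ⟨⟨hx, hy⟩, h⟩ <;> rw [mem_box1_iff hx, mem_box1_iff hy] at * <;> tauto

theorem setOf_one_lt_fst_inter_omEH (k : ιA) : {p | 1 < p.1 k} ∩ omEH ιA ιC =
    ({x | 1 < x k} ∩ {x | ∀ i, 0 ≤ x i}) ×ˢ {y | ∀ j, 0 ≤ y j} := by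
  ext ⟨x, y⟩
  simp only [omEH, mem_sdiff, mem_inter_iff, mem_prod, mem_ofPred_eq]
  constructor
  · rintro ⟨hk, ⟨hx, hy⟩, -⟩
    exact ⟨⟨hk, hx⟩, hy⟩
  · rintro ⟨⟨hk, hx⟩, hy⟩
    exact ⟨hk, ⟨hx, hy⟩, fun h => (mem_box1_iff hx).1 h.1 ⟨k, hk⟩⟩

theorem setOf_one_lt_snd_inter_omEH (k : ιC) : {p | 1 < p.2 k} ∩ omEH ιA ιC =
    {x | ∀ i, 0 ≤ x i} ×ˢ ({y | 1 < y k} ∩ {y | ∀ j, 0 ≤ y j}) := by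
  ext ⟨x, y⟩
  simp only [omEH, mem_sdiff, mem_inter_iff, mem_prod, mem_ofPred_eq]
  constructor
  · rintro ⟨hk, ⟨hx, hy⟩, -⟩
    exact ⟨hx, hk, hy⟩
  · rintro ⟨hx, hk, hy⟩
    exact ⟨hk, ⟨hx, hy⟩, fun h => (mem_box1_iff hy).1 h.2 ⟨k, hk⟩⟩

theorem ehIndep_of_innerIndep [Countable ιA] [Countable ιC] {ν : Measure ((ιA → ℝ) × (ιC → ℝ))}
    (hν : ν (omEH ιA ιC)ᶜ = 0) (h : InnerIndep ν Prod.fst Prod.snd (omEH ιA ιC)) :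
    EHIndep ν Prod.fst Prod.snd :=
  ⟨fun k => h.condIndepOn_of_inter_eq_prod hν
      ((measurableSet_lt measurable_const (measurable_pi_apply k)).inter
        measurableSet_setOf_nonneg) measurableSet_setOf_nonneg (setOf_one_lt_fst_inter_omEH k),
    fun k => h.condIndepOn_of_inter_eq_prod hν measurableSet_setOf_nonneg
      ((measurableSet_lt measurable_const (measurable_pi_apply k)).inter
        measurableSet_setOf_nonneg) (setOf_one_lt_snd_inter_omEH k)⟩

theorem outerIndep_of_ehIndep [Countable ιA] [Countable ιC] [Nonempty ιA] [Nonempty ιC]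
    {ν : Measure ((ιA → ℝ) × (ιC → ℝ))} [IsProbabilityMeasure ν]
    (hν : HasSupport ν (omEH ιA ιC)) (h : EHIndep ν Prod.fst Prod.snd) :
    OuterIndep ν Prod.fst Prod.snd (omEH ιA ιC) := by
  have hE : ∀ {ι : Type} (k : ι), MeasurableSet {x : ι → ℝ | 1 < x k} :=
    fun k => measurableSet_lt measurable_const (measurable_pi_apply k)
  have hEo : ∀ {ι : Type} (k : ι), IsOpen {x : ι → ℝ | 1 < x k} :=
    fun k => isOpen_lt continuous_const (continuous_apply k)
  obtain ⟨gA, hgA⟩ := exists_isMarginalProdOn_iUnion hE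
    (fun k j => hν.measure_ne_zero (((hEo k).inter (hEo j)).prod isOpen_univ) (by norm_num)) h.1
  obtain ⟨gC, hgC⟩ := exists_isMarginalProdOn_iUnion (ν := ν.map Prod.swap) hE
    (fun k j => by
      rw [map_swap_prod_apply ν .univ ((hE k).inter (hE j))]
      exact hν.measure_ne_zero (isOpen_univ.prod ((hEo k).inter (hEo j))) (by norm_num))
    (fun k => (condIndepOn_map_iff ν measurable_swap measurable_fst measurable_snd
      (measurable_fst (hE k))).2 (condIndepOn_comm.1 (h.2 k)))
  set UA := ⋃ k, {x : ιA → ℝ | 1 < x k}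
  set UC := ⋃ k, {y : ιC → ℝ | 1 < y k}
  have h₀ : ν (UA ×ˢ UC) ≠ 0 := by
    obtain ⟨kA⟩ := ‹Nonempty ιA›
    obtain ⟨kC⟩ := ‹Nonempty ιC›
    refine fun h0 => hν.measure_ne_zero ((hEo kA).prod (hEo kC)) (by norm_num) ?_
    exact measure_mono_null (prod_mono (subset_iUnion (fun k => {x : ιA → ℝ | 1 < x k}) kA)
      (subset_iUnion (fun k => {y : ιC → ℝ | 1 < y k}) kC)) h0
  have hK := (measurableSet_setOf_nonneg (ι := ιA)).prod (measurableSet_setOf_nonneg (ι := ιC))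
  refine outerIndep_of_prod_restrict_eq_smul (a := (ν.restrict (univ ×ˢ UC)).map Prod.fst)
    (g := (ν.restrict (UA ×ˢ univ)).map Prod.snd) ?_ h₀ (measure_ne_top _ _)
  rw [omEH_eq_inter, ← Measure.restrict_restrict hK,
    prod_restrict_union_eq_smul (.iUnion hE) (.iUnion hE) hgA hgC, Measure.restrict_smul,
    Measure.restrict_restrict hK, ← omEH_eq_inter,
    Measure.restrict_eq_self_of_ae_mem (ae_iff.2 hν.1)]

end Orthant

section Law

variable {Ω₀ α β : Type} [MeasurableSpace Ω₀] [MeasurableSpace α] [MeasurableSpace β]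
  {μ : Measure Ω₀} {YA : Ω₀ → α} {YC : Ω₀ → β}

theorem outerIndep_map_iff {Om : Set (α × β)} :
    OuterIndep (μ.map fun ω => (YA ω, YC ω)) Prod.fst Prod.snd Om ↔ OuterIndep μ YA YC Om := by
  simp only [OuterIndep, Prod.mk.eta, Measure.map_id']

theorem innerIndep_map_iff (hA : Measurable YA) (hC : Measurable YC) {Om : Set (α × β)} :
    InnerIndep (μ.map fun ω => (YA ω, YC ω)) Prod.fst Prod.snd Om ↔ InnerIndep μ YA YC Om := by
  refine forall₄_congr fun SA SC hSA hSC => imp_congr_right fun _ => ?_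
  rw [← Measure.map_apply (hA.prodMk hC) (hSA.prod hSC)]
  exact imp_congr_right fun _ =>
    condIndepOn_map_iff μ (hA.prodMk hC) measurable_fst measurable_snd (hSA.prod hSC)

theorem ehIndep_map_iff {ιA ιC : Type} {YA : Ω₀ → ιA → ℝ} {YC : Ω₀ → ιC → ℝ}
    (hA : Measurable YA) (hC : Measurable YC) :
    EHIndep (μ.map fun ω => (YA ω, YC ω)) Prod.fst Prod.snd ↔ EHIndep μ YA YC :=
  and_congr
    (forall_congr' fun k => condIndepOn_map_iff μ (hA.prodMk hC) measurable_fst measurable_snd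
      (measurableSet_lt measurable_const ((measurable_pi_apply k).comp measurable_fst)))
    (forall_congr' fun k => condIndepOn_map_iff μ (hA.prodMk hC) measurable_fst measurable_snd
      (measurableSet_lt measurable_const ((measurable_pi_apply k).comp measurable_snd)))

end Law

/-- for `Ω = [0,∞)^d \ [0,1]^d` (case `B = ∅`), outer, inner, and Engelke–Hitz
independence coincide, with no distributional assumptions on `Y` beyond its support being `Ω`. -/
theorem stmt8 {Ω₀ ιA ιC : Type} [MeasurableSpace Ω₀] [Nonempty ιA] [Nonempty ιC]
    (μ : Measure Ω₀) [IsProbabilityMeasure μ]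
    (YA : Ω₀ → ιA → ℝ) (YC : Ω₀ → ιC → ℝ)
    (hA : Measurable YA) (hC : Measurable YC)
    (hsupp : HasSupport (μ.map fun ω => (YA ω, YC ω)) (omEH ιA ιC)) :
    (OuterIndep μ YA YC (omEH ιA ιC) ↔ InnerIndep μ YA YC (omEH ιA ιC)) ∧
    (InnerIndep μ YA YC (omEH ιA ιC) ↔ EHIndep μ YA YC) := by
  rw [← outerIndep_map_iff, ← innerIndep_map_iff hA hC, ← ehIndep_map_iff hA hC]
  set ν := μ.map fun ω => (YA ω, YC ω)
  have : IsProbabilityMeasure ν := Measure.isProbabilityMeasure_map (hA.prodMk hC).aemeasurable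
  obtain ⟨_, _⟩ := hsupp.countable
  have hOI := innerIndep_of_outerIndep ν (omEH ιA ιC)
  have hIE := ehIndep_of_innerIndep hsupp.1
  have hEO := outerIndep_of_ehIndep hsupp
  exact ⟨⟨hOI, fun h => hEO (hIE h)⟩, ⟨hIE, fun h => hOI (hEO h)⟩⟩

end
end

section
/- Two-axis outer independence construction: let Y = (Y_A, Y_C) have support Ω = (L_A^2 × {0_C}) ∪ ({0_A} × L_C^2) with α = P(Y_A ∈ L_A^2, Y_C = 0_C) ∈ (0,1). Choose p_A, p_C ∈ (0,1) with α = p_A(1−p_C)/(p_A(1−p_C)+(1−p_A)p_C). Define independent W_A, W_C with CDFs F_{W_A}(w_A) = (1−p_A)P(U_A ≤ w_A) on L_A^1 and (1−p_A) + p_A P(Y_A ≤ w_A | Y_A ∈ L_A^2, Y_C = 0_C) on L_A^2, and analogously for W_C with uniform U_C and weight p_C. Then the conditional law of W = (W_A, W_C) given W ∈ Ω equals the law of Y; hence Y_A ⫫_o Y_C. -/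
/-!
On the two axes the product law of independent `W_A, W_C` is
`(1 - p_C) p_A · law(Y_A | A-axis) ⊗ δ₀ + (1 - p_A) p_C · δ₀ ⊗ law(Y_C | C-axis)`,
and the matching condition on `p_A, p_C` says exactly that these two weights are proportional
to `α` and `1 - α`. After normalization this is the mixture of the two axis-conditional laws of
`Y`, i.e. the law of `Y`. The uniform part of `W_A` is invisible on `L_A^2` and enters only
through its weight `1 - p_A` at `0_A`; replacing it by a point mass at `0_A` of the same weight
makes `Ω` non-null, so the genuine conditional law of this coupling is the law of `Y`.
-/

open MeasureTheory ProbabilityTheory Set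
open scoped ENNReal

noncomputable section

/-- The two-axis set `Ω = (L_A^2 × {0_C}) ∪ ({0_A} × L_C^2)`. -/
def omAxes (ιA ιC : Type*) : Set ((ιA → ℝ) × (ιC → ℝ)) :=
  (box2 ιA ×ˢ ({fun _ => 0} : Set (ιC → ℝ))) ∪ (({fun _ => 0} : Set (ιA → ℝ)) ×ˢ box2 ιC)

lemma box1_eq_pi (ι : Type*) : box1 ι = univ.pi fun _ => Icc (0:ℝ) 1 := by
  ext x; simp [box1, Pi.le_def, forall_and]

lemma measurableSet_box1 (ι : Type*) [Countable ι] : MeasurableSet (box1 ι) := by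
  rw [box1_eq_pi]; exact .univ_pi fun _ => measurableSet_Icc

lemma measurableSet_omAxes (ιA ιC : Type*) [Countable ιA] [Countable ιC] :
    MeasurableSet (omAxes ιA ιC) :=
  ((measurableSet_box2 ιA).prod (measurableSet_singleton _)).union
    ((measurableSet_singleton _).prod (measurableSet_box2 ιC))

lemma zero_notMem_box2 (ι : Type*) : (fun _ => 0 : ι → ℝ) ∉ box2 ι :=
  fun h => h.2 fun _ => ⟨le_rfl, zero_le_one⟩

lemma pi_restrict_Icc_box2 (ι : Type*) [Fintype ι] :
    (Measure.pi fun _ : ι => volume.restrict (Icc (0:ℝ) 1)) (box2 ι) = 0 := by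
  rw [← Measure.restrict_pi_pi, ← box1_eq_pi,
    Measure.restrict_apply (measurableSet_box2 ι), box2, sdiff_inter_self, measure_empty]

lemma axis_normalizer_pos {p q : ℝ} (hp : p ∈ Ioo (0:ℝ) 1) (hq : q ∈ Ioo (0:ℝ) 1) :
    0 < p * (1 - q) + (1 - p) * q := by
  obtain ⟨hp0, hp1⟩ := hp
  obtain ⟨hq0, hq1⟩ := hq
  nlinarith

lemma ofReal_smul_smul_add_eq_smul_mixture {M : Type*} [AddCommMonoid M] [Module ℝ≥0∞ M]
    {a p q : ℝ} (hp : p ∈ Ioo (0:ℝ) 1) (hq : q ∈ Ioo (0:ℝ) 1)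
    (ha : a = p * (1 - q) / (p * (1 - q) + (1 - p) * q)) (m₁ m₂ : M) :
    ENNReal.ofReal (1 - q) • ENNReal.ofReal p • m₁ +
        ENNReal.ofReal (1 - p) • ENNReal.ofReal q • m₂ =
      ENNReal.ofReal (p * (1 - q) + (1 - p) * q) •
        (ENNReal.ofReal a • m₁ + ENNReal.ofReal (1 - a) • m₂) := by
  set c := p * (1 - q) + (1 - p) * q with hc
  have hc0 : 0 < c := axis_normalizer_pos hp hq
  have hca : c * a = (1 - q) * p := by rw [ha, mul_div_cancel₀ _ hc0.ne']; ring
  have hca' : c * (1 - a) = (1 - p) * q := by linear_combination hc - hca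
  rw [smul_add, smul_smul, smul_smul, smul_smul, smul_smul, ← ENNReal.ofReal_mul hc0.le,
    ← ENNReal.ofReal_mul hc0.le, hca, hca', ENNReal.ofReal_mul (by linarith [hq.2]),
    ENNReal.ofReal_mul (by linarith [hp.2])]

section Axes

variable {α β : Type*} [MeasurableSpace α] [MeasurableSpace β]

lemma MeasureTheory.Measure.restrict_smul_add_smul_of_ae_mem {μ ν : Measure α} {s : Set α}
    (c d : ℝ≥0∞) (hμ : μ s = 0) (hν : ∀ᵐ x ∂ν, x ∈ s) : (c • μ + d • ν).restrict s = d • ν := by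
  rw [Measure.restrict_add, Measure.restrict_smul, Measure.restrict_smul,
    Measure.restrict_eq_zero.mpr hμ, Measure.restrict_eq_self_of_ae_mem hν, smul_zero, zero_add]

lemma MeasureTheory.Measure.smul_dirac_add_smul_apply_singleton {ν : Measure α} (c d : ℝ≥0∞)
    {a : α} (hν : ν {a} = 0) : (c • Measure.dirac a + d • ν) {a} = c := by
  simp [hν]

lemma MeasureTheory.Measure.map_prodMk_of_ae_eq_const_right {Ω : Type*} [MeasurableSpace Ω]
    {μ : Measure Ω} {X : Ω → α} {Z : Ω → β} (hX : Measurable X) (b : β)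
    (hZ : ∀ᵐ ω ∂μ, Z ω = b) :
    μ.map (fun ω => (X ω, Z ω)) = (μ.map X).map (·, b) := by
  rw [Measure.map_map measurable_prodMk_right hX]
  exact Measure.map_congr (by filter_upwards [hZ] with ω hω; simp [hω])

lemma MeasureTheory.Measure.map_prodMk_of_ae_eq_const_left {Ω : Type*} [MeasurableSpace Ω]
    {μ : Measure Ω} {X : Ω → α} {Z : Ω → β} (hZ : Measurable Z) (a : α)
    (hX : ∀ᵐ ω ∂μ, X ω = a) :
    μ.map (fun ω => (X ω, Z ω)) = (μ.map Z).map (a, ·) := by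
  rw [Measure.map_map measurable_prodMk_left hZ]
  exact Measure.map_congr (by filter_upwards [hX] with ω hω; simp [hω])

lemma MeasureTheory.Measure.prod_restrict_axes [MeasurableSingletonClass α]
    [MeasurableSingletonClass β] (μ : Measure α) (ν : Measure β) [SFinite μ] [SFinite ν]
    {s : Set α} {t : Set β} {a : α} {b : β} (ht : MeasurableSet t) (ha : a ∉ s) :
    (μ.prod ν).restrict (s ×ˢ {b} ∪ {a} ×ˢ t) =
      ν {b} • (μ.restrict s).map (·, b) + μ {a} • (ν.restrict t).map (a, ·) := by
  have hdisj : Disjoint (s ×ˢ {b}) ({a} ×ˢ t) :=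
    disjoint_left.mpr fun p h₁ h₂ => ha (h₂.1 ▸ h₁.1)
  rw [Measure.restrict_union hdisj ((measurableSet_singleton a).prod ht), ← Measure.prod_restrict,
    ← Measure.prod_restrict, Measure.restrict_singleton, Measure.restrict_singleton,
    Measure.prod_smul_right, Measure.prod_smul_left, Measure.prod_dirac, Measure.dirac_prod]

lemma MeasureTheory.Measure.prod_restrict_axes_smul_dirac_add_smul [MeasurableSingletonClass α]
    [MeasurableSingletonClass β] (c d c' d' : ℝ≥0∞) {κ₁ : Measure α} {κ₂ : Measure β}
    [SFinite κ₁] [SFinite κ₂] {s : Set α} {t : Set β} {a : α} {b : β} (ht : MeasurableSet t)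
    (ha : a ∉ s) (hb : b ∉ t) (hκ₁ : ∀ᵐ x ∂κ₁, x ∈ s) (hκ₂ : ∀ᵐ y ∂κ₂, y ∈ t) :
    ((c • Measure.dirac a + d • κ₁).prod (c' • Measure.dirac b + d' • κ₂)).restrict
        (s ×ˢ {b} ∪ {a} ×ˢ t) =
      c' • (d • κ₁).map (·, b) + c • (d' • κ₂).map (a, ·) := by
  rw [Measure.prod_restrict_axes _ _ ht ha,
    Measure.smul_dirac_add_smul_apply_singleton c d
      (measure_mono_null (singleton_subset_iff.mpr ha) (ae_iff.mp hκ₁)),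
    Measure.smul_dirac_add_smul_apply_singleton c' d'
      (measure_mono_null (singleton_subset_iff.mpr hb) (ae_iff.mp hκ₂)),
    Measure.restrict_smul_add_smul_of_ae_mem c d (by simp [ha]) hκ₁,
    Measure.restrict_smul_add_smul_of_ae_mem c' d' (by simp [hb]) hκ₂]

end Axes

section Conditioning

variable {Ω α β : Type*} [MeasurableSpace Ω] [MeasurableSpace α] [MeasurableSpace β]
  {μ : Measure Ω}

lemma ProbabilityTheory.measure_smul_cond [IsFiniteMeasure μ] (s : Set Ω) :
    μ s • μ[|s] = μ.restrict s := by
  rcases eq_or_ne (μ s) 0 with h | h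
  · rw [h, zero_smul, Measure.restrict_eq_zero.mpr h]
  · rw [cond, smul_smul, ENNReal.mul_inv_cancel h (measure_ne_top μ s), one_smul]

lemma ProbabilityTheory.cond_eq_of_restrict_eq_smul {ρ : Measure Ω} [IsProbabilityMeasure ρ]
    {s : Set Ω} {r : ℝ≥0∞} (hr0 : r ≠ 0) (hr : r ≠ ∞) (h : μ.restrict s = r • ρ) :
    μ[|s] = ρ := by
  have hμs : μ s = r := by
    rw [← Measure.restrict_apply_univ, h, Measure.smul_apply, measure_univ, smul_eq_mul, mul_one]
  rw [cond, hμs, h, smul_smul, ENNReal.inv_mul_cancel hr0 hr, one_smul]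

lemma ProbabilityTheory.measure_eq_ofReal_one_sub [IsProbabilityMeasure μ] {s t : Set Ω}
    (hst : Disjoint s t) (hs : MeasurableSet s) (ht : MeasurableSet t)
    (hnull : μ (s ∪ t)ᶜ = 0) {a : ℝ} (ha : 0 ≤ a) (hμs : μ s = ENNReal.ofReal a) :
    μ t = ENNReal.ofReal (1 - a) := by
  have h : μ t + μ s = 1 := by
    rw [add_comm, ← measure_union hst ht, ← prob_compl_eq_zero_iff (hs.union ht), hnull]
  rw [ENNReal.eq_sub_of_add_eq (measure_ne_top μ s) h, hμs, ENNReal.ofReal_sub 1 ha,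
    ENNReal.ofReal_one]

lemma ProbabilityTheory.map_prodMk_eq_smul_cond_add_smul_cond [IsFiniteMeasure μ]
    {X : Ω → α} {Z : Ω → β} (hX : Measurable X) (hZ : Measurable Z) {E F : Set Ω}
    (hEF : Disjoint E F) (hE : MeasurableSet E) (hF : MeasurableSet F)
    (hnull : μ (E ∪ F)ᶜ = 0) {a : α} {b : β} (hZE : ∀ ω ∈ E, Z ω = b) (hXF : ∀ ω ∈ F, X ω = a) :
    μ.map (fun ω => (X ω, Z ω)) =
      μ E • ((μ[|E]).map X).map (·, b) + μ F • ((μ[|F]).map Z).map (a, ·) := by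
  have hμ : μ = μ E • μ[|E] + μ F • μ[|F] := by
    rw [measure_smul_cond, measure_smul_cond, ← Measure.restrict_union hEF hF,
      Measure.restrict_eq_self_of_ae_mem (ae_iff.mpr hnull)]
  nth_rewrite 1 [hμ]
  rw [Measure.map_add _ _ (hX.prodMk hZ), Measure.map_smul, Measure.map_smul,
    Measure.map_prodMk_of_ae_eq_const_right hX b (ae_cond_of_forall_mem hE hZE),
    Measure.map_prodMk_of_ae_eq_const_left hZ a (ae_cond_of_forall_mem hF hXF)]

lemma ProbabilityTheory.isProbabilityMeasure_map_cond [IsFiniteMeasure μ] {X : Ω → α}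
    (hX : Measurable X) {E : Set Ω} (hE : μ E ≠ 0) : IsProbabilityMeasure ((μ[|E]).map X) :=
  have := cond_isProbabilityMeasure hE
  Measure.isProbabilityMeasure_map hX.aemeasurable

lemma ProbabilityTheory.ae_mem_map_cond {X : Ω → α} (hX : Measurable X) {s : Set α}
    (hs : MeasurableSet s) {E : Set Ω} (hE : MeasurableSet E) (hEs : ∀ ω ∈ E, X ω ∈ s) :
    ∀ᵐ x ∂(μ[|E]).map X, x ∈ s :=
  (ae_map_iff hX.aemeasurable hs).mpr (ae_cond_of_forall_mem hE hEs)

lemma isProbabilityMeasure_ofReal_smul_add {μ ν : Measure α} [IsProbabilityMeasure μ]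
    [IsProbabilityMeasure ν] {p : ℝ} (hp : p ∈ Ioo (0:ℝ) 1) :
    IsProbabilityMeasure (ENNReal.ofReal (1 - p) • μ + ENNReal.ofReal p • ν) := by
  constructor
  simp only [Measure.add_apply, Measure.smul_apply, measure_univ, smul_eq_mul, mul_one]
  rw [← ENNReal.ofReal_add (by linarith [hp.2]) hp.1.le, sub_add_cancel, ENNReal.ofReal_one]

lemma ProbabilityTheory.indepFun_fst_snd (μ : Measure α) (ν : Measure β) [IsProbabilityMeasure μ]
    [IsProbabilityMeasure ν] : IndepFun Prod.fst Prod.snd (μ.prod ν) := by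
  rw [indepFun_iff_map_prod_eq_prod_map_map measurable_fst.aemeasurable
    measurable_snd.aemeasurable, Measure.map_fst_prod, Measure.map_snd_prod]
  simp

end Conditioning

section TwoAxisCoupling

variable {α β : Type*} [MeasurableSpace α] [MeasurableSpace β] {a₀ : α} {b₀ : β}
  {κA : Measure α} {κC : Measure β} {ρ : Measure (α × β)} {a p q : ℝ}

lemma ofReal_smul_axis_weights_eq (hp : p ∈ Ioo (0:ℝ) 1) (hq : q ∈ Ioo (0:ℝ) 1)
    (ha : a = p * (1 - q) / (p * (1 - q) + (1 - p) * q))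
    (hρ : ρ = ENNReal.ofReal a • κA.map (·, b₀) + ENNReal.ofReal (1 - a) • κC.map (a₀, ·)) :
    ENNReal.ofReal (1 - q) • (ENNReal.ofReal p • κA).map (·, b₀) +
        ENNReal.ofReal (1 - p) • (ENNReal.ofReal q • κC).map (a₀, ·) =
      ENNReal.ofReal (p * (1 - q) + (1 - p) * q) • ρ := by
  rw [Measure.map_smul, Measure.map_smul, hρ]
  exact ofReal_smul_smul_add_eq_smul_mixture hp hq ha _ _

lemma inv_smul_axis_weights_eq (hp : p ∈ Ioo (0:ℝ) 1) (hq : q ∈ Ioo (0:ℝ) 1)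
    (ha : a = p * (1 - q) / (p * (1 - q) + (1 - p) * q))
    (hρ : ρ = ENNReal.ofReal a • κA.map (·, b₀) + ENNReal.ofReal (1 - a) • κC.map (a₀, ·)) :
    (ENNReal.ofReal (p * (1 - q) + (1 - p) * q))⁻¹ •
        (ENNReal.ofReal (1 - q) • (ENNReal.ofReal p • κA).map (·, b₀) +
          ENNReal.ofReal (1 - p) • (ENNReal.ofReal q • κC).map (a₀, ·)) = ρ := by
  rw [ofReal_smul_axis_weights_eq hp hq ha hρ, smul_smul,
    ENNReal.inv_mul_cancel (ENNReal.ofReal_pos.mpr (axis_normalizer_pos hp hq)).ne'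
      ENNReal.ofReal_ne_top, one_smul]

lemma cond_prod_axes_eq [MeasurableSingletonClass α] [MeasurableSingletonClass β] [SFinite κA]
    [SFinite κC] [IsProbabilityMeasure ρ] {s : Set α} {t : Set β} (ht : MeasurableSet t)
    (ha₀ : a₀ ∉ s) (hb₀ : b₀ ∉ t) (hκA : ∀ᵐ x ∂κA, x ∈ s) (hκC : ∀ᵐ y ∂κC, y ∈ t)
    (hp : p ∈ Ioo (0:ℝ) 1) (hq : q ∈ Ioo (0:ℝ) 1)
    (ha : a = p * (1 - q) / (p * (1 - q) + (1 - p) * q))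
    (hρ : ρ = ENNReal.ofReal a • κA.map (·, b₀) + ENNReal.ofReal (1 - a) • κC.map (a₀, ·)) :
    ((ENNReal.ofReal (1 - p) • Measure.dirac a₀ + ENNReal.ofReal p • κA).prod
        (ENNReal.ofReal (1 - q) • Measure.dirac b₀ + ENNReal.ofReal q • κC))[|s ×ˢ {b₀} ∪ {a₀} ×ˢ t]
      = ρ :=
  cond_eq_of_restrict_eq_smul (ENNReal.ofReal_pos.mpr (axis_normalizer_pos hp hq)).ne'
    ENNReal.ofReal_ne_top (by
      rw [Measure.prod_restrict_axes_smul_dirac_add_smul _ _ _ _ ht ha₀ hb₀ hκA hκC,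
        ofReal_smul_axis_weights_eq hp hq ha hρ])

end TwoAxisCoupling

lemma outerIndep_of_cond_prod_eq {Ω₀ α β : Type} [MeasurableSpace Ω₀] [MeasurableSpace α]
    [MeasurableSpace β] {μ : Measure Ω₀} {YA : Ω₀ → α} {YC : Ω₀ → β} {Om : Set (α × β)}
    (PA : Measure α) (PC : Measure β) [IsProbabilityMeasure PA] [IsProbabilityMeasure PC]
    (h : (PA.prod PC)[|Om] = μ.map fun ω => (YA ω, YC ω)) :
    OuterIndep μ YA YC Om :=
  ⟨α × β, inferInstance, PA.prod PC, Prod.fst, Prod.snd, univ, univ, inferInstance,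
    measurable_fst, measurable_snd, by simp, by simp, indepFun_fst_snd PA PC,
    by rw [← h]; exact Measure.map_id⟩

lemma outerIndep_of_map_eq_axis_mixture {Ω₀ α β : Type} [MeasurableSpace Ω₀] [MeasurableSpace α]
    [MeasurableSpace β] [MeasurableSingletonClass α] [MeasurableSingletonClass β]
    {μ : Measure Ω₀} [IsProbabilityMeasure μ] {YA : Ω₀ → α} {YC : Ω₀ → β} (hYA : Measurable YA)
    (hYC : Measurable YC) {κA : Measure α} {κC : Measure β} [IsProbabilityMeasure κA]
    [IsProbabilityMeasure κC] {s : Set α} {t : Set β} {a₀ : α} {b₀ : β} (ht : MeasurableSet t)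
    (ha₀ : a₀ ∉ s) (hb₀ : b₀ ∉ t) (hκA : ∀ᵐ x ∂κA, x ∈ s) (hκC : ∀ᵐ y ∂κC, y ∈ t)
    {a p q : ℝ} (hp : p ∈ Ioo (0:ℝ) 1) (hq : q ∈ Ioo (0:ℝ) 1)
    (ha : a = p * (1 - q) / (p * (1 - q) + (1 - p) * q))
    (hlaw : μ.map (fun ω => (YA ω, YC ω)) =
      ENNReal.ofReal a • κA.map (·, b₀) + ENNReal.ofReal (1 - a) • κC.map (a₀, ·)) :
    OuterIndep μ YA YC (s ×ˢ {b₀} ∪ {a₀} ×ˢ t) :=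
  have := Measure.isProbabilityMeasure_map (μ := μ) (hYA.prodMk hYC).aemeasurable
  have := isProbabilityMeasure_ofReal_smul_add (μ := Measure.dirac a₀) (ν := κA) hp
  have := isProbabilityMeasure_ofReal_smul_add (μ := Measure.dirac b₀) (ν := κC) hq
  outerIndep_of_cond_prod_eq _ _ (cond_prod_axes_eq ht ha₀ hb₀ hκA hκC hp hq ha hlaw)

theorem stmt13_general {Ω₀ ιA ιC : Type} [MeasurableSpace Ω₀] [Fintype ιA] [Fintype ιC]
    (μ : Measure Ω₀) [IsProbabilityMeasure μ]
    (YA : Ω₀ → ιA → ℝ) (YC : Ω₀ → ιC → ℝ)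
    (hA : Measurable YA) (hC : Measurable YC)
    (hsupp : HasSupport (μ.map fun ω => (YA ω, YC ω)) (omAxes ιA ιC))
    (a pA pC : ℝ)
    (ha0 : 0 < a) (ha1 : a < 1)
    (hpA : pA ∈ Set.Ioo (0:ℝ) 1) (hpC : pC ∈ Set.Ioo (0:ℝ) 1)
    (haxis : μ {ω | YA ω ∈ box2 ιA ∧ YC ω = fun _ => 0} = ENNReal.ofReal a)
    (hmatch : a = pA * (1 - pC) / (pA * (1 - pC) + (1 - pA) * pC))
    (νA : Measure (ιA → ℝ)) (νC : Measure (ιC → ℝ))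
    (hνA : νA =
      (ENNReal.ofReal (1 - pA)) • (Measure.pi fun _ : ιA => volume.restrict (Set.Icc (0:ℝ) 1)) +
      (ENNReal.ofReal pA) • ((μ[|{ω | YA ω ∈ box2 ιA ∧ YC ω = fun _ => 0}]).map YA))
    (hνC : νC =
      (ENNReal.ofReal (1 - pC)) • (Measure.pi fun _ : ιC => volume.restrict (Set.Icc (0:ℝ) 1)) +
      (ENNReal.ofReal pC) • ((μ[|{ω | YA ω = (fun _ => 0) ∧ YC ω ∈ box2 ιC}]).map YC)) :
    ((ENNReal.ofReal (pA * (1 - pC) + (1 - pA) * pC))⁻¹ •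
      ((ENNReal.ofReal (1 - pC)) •
          ((νA.restrict (box2 ιA)).map fun x => (x, (fun _ => 0 : ιC → ℝ))) +
        (ENNReal.ofReal (1 - pA)) •
          ((νC.restrict (box2 ιC)).map fun y => ((fun _ => 0 : ιA → ℝ), y))) =
      μ.map fun ω => (YA ω, YC ω)) ∧
    OuterIndep μ YA YC (omAxes ιA ιC) := by
  set EA := {ω | YA ω ∈ box2 ιA ∧ YC ω = fun _ => 0}
  set EC := {ω | YA ω = (fun _ => 0) ∧ YC ω ∈ box2 ιC}
  have hEA : MeasurableSet EA := (hA (measurableSet_box2 ιA)).inter (hC (measurableSet_singleton _))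
  have hEC : MeasurableSet EC := (hA (measurableSet_singleton _)).inter (hC (measurableSet_box2 ιC))
  have hdisj : Disjoint EA EC :=
    disjoint_left.mpr fun ω (h₁ : ω ∈ EA) (h₂ : ω ∈ EC) => zero_notMem_box2 ιA (h₂.1 ▸ h₁.1)
  have hnull : μ (EA ∪ EC)ᶜ = 0 := by
    have h := hsupp.1
    rwa [Measure.map_apply (hA.prodMk hC) (measurableSet_omAxes ιA ιC).compl] at h
  have hμEC := measure_eq_ofReal_one_sub hdisj hEA hEC hnull ha0.le haxis
  have := isProbabilityMeasure_map_cond hA (show μ EA ≠ 0 by simp [haxis, ha0])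
  have := isProbabilityMeasure_map_cond hC (show μ EC ≠ 0 by simp [hμEC, ha1])
  have hκA := ae_mem_map_cond (μ := μ) hA (measurableSet_box2 ιA) hEA fun _ h => h.1
  have hκC := ae_mem_map_cond (μ := μ) hC (measurableSet_box2 ιC) hEC fun _ h => h.2
  have hlaw : μ.map (fun ω => (YA ω, YC ω)) =
      ENNReal.ofReal a • ((μ[|EA]).map YA).map (·, (fun _ => 0 : ιC → ℝ)) +
        ENNReal.ofReal (1 - a) • ((μ[|EC]).map YC).map ((fun _ => 0 : ιA → ℝ), ·) := by
    rw [map_prodMk_eq_smul_cond_add_smul_cond hA hC hdisj hEA hEC hnull (fun _ h => h.2)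
      (fun _ h => h.1), haxis, hμEC]
  have hνA_box2 : νA.restrict (box2 ιA) = ENNReal.ofReal pA • (μ[|EA]).map YA :=
    hνA ▸ Measure.restrict_smul_add_smul_of_ae_mem _ _ (pi_restrict_Icc_box2 ιA) hκA
  have hνC_box2 : νC.restrict (box2 ιC) = ENNReal.ofReal pC • (μ[|EC]).map YC :=
    hνC ▸ Measure.restrict_smul_add_smul_of_ae_mem _ _ (pi_restrict_Icc_box2 ιC) hκC
  rw [hνA_box2, hνC_box2]
  exact ⟨inv_smul_axis_weights_eq hpA hpC hmatch hlaw,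
    outerIndep_of_map_eq_axis_mixture hA hC (measurableSet_box2 ιC) (zero_notMem_box2 ιA)
      (zero_notMem_box2 ιC) hκA hκC hpA hpC hmatch hlaw⟩

/-- two-axis outer independence construction: with `Y` supported on the two
axes, `α = P(Y_A ∈ L_A^2, Y_C = 0) ∈ (0,1)` and `p_A, p_C ∈ (0,1)` matched so that
`α = p_A(1-p_C)/(p_A(1-p_C)+(1-p_A)p_C)`, the independent coupling `W = (W_A, W_C)` with
marginals mixing a uniform law on `L^1` (weight `1-p`) with the conditional law of the
corresponding axis (weight `p`) satisfies: the (density-version) conditional law of `W` given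
`W ∈ Ω` — the normalized sum of the two axis contributions with the density-at-zero weights —
equals the law of `Y`; hence `Y_A ⫫ₒ Y_C`. -/
theorem stmt13 {Ω₀ ιA ιC : Type} [MeasurableSpace Ω₀] [Fintype ιA] [Fintype ιC]
    [Nonempty ιA] [Nonempty ιC]
    (μ : Measure Ω₀) [IsProbabilityMeasure μ]
    (YA : Ω₀ → ιA → ℝ) (YC : Ω₀ → ιC → ℝ)
    (hA : Measurable YA) (hC : Measurable YC)
    (hsupp : HasSupport (μ.map fun ω => (YA ω, YC ω)) (omAxes ιA ιC))
    (a pA pC : ℝ)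
    (ha0 : 0 < a) (ha1 : a < 1)
    (hpA : pA ∈ Set.Ioo (0:ℝ) 1) (hpC : pC ∈ Set.Ioo (0:ℝ) 1)
    (haxis : μ {ω | YA ω ∈ box2 ιA ∧ YC ω = fun _ => 0} = ENNReal.ofReal a)
    (hmatch : a = pA * (1 - pC) / (pA * (1 - pC) + (1 - pA) * pC))
    (νA : Measure (ιA → ℝ)) (νC : Measure (ιC → ℝ))
    (hνA : νA =
      (ENNReal.ofReal (1 - pA)) • (Measure.pi fun _ : ιA => volume.restrict (Set.Icc (0:ℝ) 1)) +
      (ENNReal.ofReal pA) • ((μ[|{ω | YA ω ∈ box2 ιA ∧ YC ω = fun _ => 0}]).map YA))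
    (hνC : νC =
      (ENNReal.ofReal (1 - pC)) • (Measure.pi fun _ : ιC => volume.restrict (Set.Icc (0:ℝ) 1)) +
      (ENNReal.ofReal pC) • ((μ[|{ω | YA ω = (fun _ => 0) ∧ YC ω ∈ box2 ιC}]).map YC)) :
    ((ENNReal.ofReal (pA * (1 - pC) + (1 - pA) * pC))⁻¹ •
      ((ENNReal.ofReal (1 - pC)) •
          ((νA.restrict (box2 ιA)).map fun x => (x, (fun _ => 0 : ιC → ℝ))) +
        (ENNReal.ofReal (1 - pA)) •
          ((νC.restrict (box2 ιC)).map fun y => ((fun _ => 0 : ιA → ℝ), y))) =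
      μ.map fun ω => (YA ω, YC ω)) ∧
    OuterIndep μ YA YC (omAxes ιA ιC) :=
  stmt13_general μ YA YC hA hC hsupp a pA pC ha0 ha1 hpA hpC haxis hmatch νA νC hνA hνC

end
end

section
/- Block-conditional independence from EH hypothesis: let Y = (Y_A, Y_C) have support Ω = [0,∞)^d \ [0,1]^d and suppose Y_A ⫫ Y_C given {Y_k > 1} for all k. Let W have law given by the independent-coupling construction (λ-rescaled off the corner block, product formula on L_A^1 × L_C^1). Then for all k ∈ A ∪ C with P(W_k > 1) > 0, W_A ⫫ W_C given {W_k > 1}; i.e., the constructed W inherits the EH conditional independences. -/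
open MeasureTheory ProbabilityTheory Set
open scoped ENNReal

noncomputable section

/-- every measurable set in a pi space depends on countably many coordinates -/
lemma pi_dependsOn {ι : Type*} {S : Set (ι → ℝ)} (hS : MeasurableSet S) :
    ∃ J : Set ι, J.Countable ∧ ∀ x y : ι → ℝ, (∀ i ∈ J, x i = y i) → (x ∈ S ↔ y ∈ S) := by
  let m' : MeasurableSpace (ι → ℝ) :=
    { MeasurableSet' := fun S =>
        ∃ J : Set ι, J.Countable ∧ ∀ x y : ι → ℝ, (∀ i ∈ J, x i = y i) → (x ∈ S ↔ y ∈ S)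
      measurableSet_empty := ⟨∅, countable_empty, by simp⟩
      measurableSet_compl := by
        rintro S ⟨J, hJ, h⟩
        exact ⟨J, hJ, fun x y hxy => not_congr (h x y hxy)⟩
      measurableSet_iUnion := by
        intro f hf
        choose J hJc hJ using hf
        refine ⟨⋃ n, J n, countable_iUnion hJc, fun x y hxy => ?_⟩
        simp only [mem_iUnion]
        exact exists_congr fun n => hJ n x y fun i hi => hxy i (mem_iUnion.2 ⟨n, hi⟩) }
  have hle : (MeasurableSpace.pi : MeasurableSpace (ι → ℝ)) ≤ m' := by
    refine iSup_le fun i => ?_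
    intro s hs
    obtain ⟨t, -, rfl⟩ := hs
    exact ⟨{i}, countable_singleton i, fun x y hxy => by
      simp only [mem_preimage, hxy i (mem_singleton i)]⟩
  exact hle S hS

lemma prod_dependsOn {ιA ιC : Type*} {S : Set ((ιA → ℝ) × (ιC → ℝ))} (hS : MeasurableSet S) :
    ∃ (JA : Set ιA) (JC : Set ιC), JA.Countable ∧ JC.Countable ∧
      ∀ p q : (ιA → ℝ) × (ιC → ℝ), (∀ i ∈ JA, p.1 i = q.1 i) → (∀ j ∈ JC, p.2 j = q.2 j) →
        (p ∈ S ↔ q ∈ S) := by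
  let m' : MeasurableSpace ((ιA → ℝ) × (ιC → ℝ)) :=
    { MeasurableSet' := fun S =>
        ∃ (JA : Set ιA) (JC : Set ιC), JA.Countable ∧ JC.Countable ∧
          ∀ p q : (ιA → ℝ) × (ιC → ℝ), (∀ i ∈ JA, p.1 i = q.1 i) →
            (∀ j ∈ JC, p.2 j = q.2 j) → (p ∈ S ↔ q ∈ S)
      measurableSet_empty := ⟨∅, ∅, countable_empty, countable_empty, by simp⟩
      measurableSet_compl := by
        rintro S ⟨JA, JC, hJA, hJC, h⟩
        exact ⟨JA, JC, hJA, hJC, fun p q h1 h2 => not_congr (h p q h1 h2)⟩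
      measurableSet_iUnion := by
        intro f hf
        choose JA JC hJA hJC hJ using hf
        refine ⟨⋃ n, JA n, ⋃ n, JC n, countable_iUnion hJA, countable_iUnion hJC,
          fun p q h1 h2 => ?_⟩
        simp only [mem_iUnion]
        exact exists_congr fun n => hJ n p q
          (fun i hi => h1 i (mem_iUnion.2 ⟨n, hi⟩)) (fun j hj => h2 j (mem_iUnion.2 ⟨n, hj⟩)) }
  have hle : (Prod.instMeasurableSpace : MeasurableSpace ((ιA → ℝ) × (ιC → ℝ))) ≤ m' := by
    refine sup_le ?_ ?_
    · intro s hs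
      obtain ⟨t, ht, rfl⟩ := hs
      obtain ⟨J, hJ, h⟩ := pi_dependsOn ht
      exact ⟨J, ∅, hJ, countable_empty, fun p q h1 _ => h p.1 q.1 h1⟩
    · intro s hs
      obtain ⟨t, ht, rfl⟩ := hs
      obtain ⟨J, hJ, h⟩ := pi_dependsOn ht
      exact ⟨∅, J, countable_empty, hJ, fun p q _ h2 => h p.2 q.2 h2⟩
  exact hle S hS

lemma aux_transfer {X α β : Type*} [MeasurableSpace X] [MeasurableSpace α] [MeasurableSpace β]
    (κ ν : Measure X) (lam : ℝ≥0∞) (hl0 : lam ≠ 0) (hlT : lam ≠ ⊤)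
    (E : Set X) (hE : MeasurableSet E) (f : X → α) (g : X → β)
    (hlink : ∀ (HA : Set α) (HC : Set β), MeasurableSet HA → MeasurableSet HC →
      κ (E ∩ (f ⁻¹' HA ∩ g ⁻¹' HC)) = lam * ν (E ∩ (f ⁻¹' HA ∩ g ⁻¹' HC)))
    (hνind : condIndepOn ν E f g) : condIndepOn κ E f g := by
  intro HA HC mHA mHC
  have hEeq : κ E = lam * ν E := by
    simpa using hlink univ univ MeasurableSet.univ MeasurableSet.univ
  have conv : ∀ s : Set X, κ (E ∩ s) = lam * ν (E ∩ s) → κ[|E] s = ν[|E] s := by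
    intro s hs
    rw [cond_apply hE, cond_apply hE, hs, hEeq,
      ENNReal.mul_inv (Or.inl hl0) (Or.inl hlT), mul_mul_mul_comm,
      ENNReal.inv_mul_cancel hl0 hlT, one_mul]
  rw [conv _ (hlink HA HC mHA mHC),
    conv _ (by simpa using hlink HA univ mHA MeasurableSet.univ),
    conv _ (by simpa using hlink univ HC MeasurableSet.univ mHC)]
  exact hνind HA HC mHA mHC

lemma condIndepOn_map {Ω₀ X α β : Type*} [MeasurableSpace Ω₀] [MeasurableSpace X]
    [MeasurableSpace α] [MeasurableSpace β]
    (μ : Measure Ω₀) (F : Ω₀ → X) (hF : Measurable F) (E : Set X) (hE : MeasurableSet E)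
    (f : X → α) (g : X → β) (hf : Measurable f) (hg : Measurable g)
    (h : condIndepOn μ (F ⁻¹' E) (f ∘ F) (g ∘ F)) : condIndepOn (μ.map F) E f g := by
  intro HA HC mHA mHC
  have e : ∀ s : Set X, MeasurableSet s → (μ.map F)[|E] s = μ[|F ⁻¹' E] (F ⁻¹' s) := by
    intro s hs
    rw [cond_apply hE, cond_apply (hF hE), Measure.map_apply hF hE,
      Measure.map_apply hF (hE.inter hs), preimage_inter]
  rw [e _ ((hf mHA).inter (hg mHC)), e _ (hf mHA), e _ (hg mHC)]
  simpa [Set.preimage_comp, Set.preimage_inter] using h HA HC mHA mHC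



/-- the coupling `W ~ κ` constructed from `Y` by the λ-rescaling off the corner
block together with the product formula on `L_A^1 × L_C^1` inherits the Engelke–Hitz
conditional independences: for every coordinate `k` with `P(W_k > 1) > 0`,
`W_A ⫫ W_C` given `{W_k > 1}`. -/
theorem stmt18 {Ω₀ ιA ιC : Type} [MeasurableSpace Ω₀] [Nonempty ιA] [Nonempty ιC]
    (μ : Measure Ω₀) [IsProbabilityMeasure μ]
    (YA : Ω₀ → ιA → ℝ) (YC : Ω₀ → ιC → ℝ)
    (hA : Measurable YA) (hC : Measurable YC)
    (ν : Measure ((ιA → ℝ) × (ιC → ℝ)))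
    (hν : ν = μ.map fun ω => (YA ω, YC ω))
    (hsupp : ν (omEH ιA ιC)ᶜ = 0)
    (h12 : 0 < ν (box1 ιA ×ˢ box2 ιC))
    (h21 : 0 < ν (box2 ιA ×ˢ box1 ιC))
    (h22 : 0 < ν (box2 ιA ×ˢ box2 ιC))
    -- the Engelke–Hitz hypothesis on Y
    (hEHA : ∀ k : ιA, condIndepOn μ {ω | 1 < YA ω k} YA YC)
    (hEHC : ∀ k : ιC, condIndepOn μ {ω | 1 < YC ω k} YA YC)
    -- the normalizing constant
    (lam : ℝ≥0∞)
    (hlam : lam = 1 / (1 + ν (box1 ιA ×ˢ box2 ιC) * ν (box2 ιA ×ˢ box1 ιC) /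
      ν (box2 ιA ×ˢ box2 ιC)))
    -- the constructed coupling measure κ (the law of W)
    (κ : Measure ((ιA → ℝ) × (ιC → ℝ))) [IsProbabilityMeasure κ]
    (hκ12 : ∀ (HA : Set (ιA → ℝ)) (HC : Set (ιC → ℝ)), MeasurableSet HA → MeasurableSet HC →
      HA ⊆ box1 ιA → HC ⊆ box2 ιC → κ (HA ×ˢ HC) = lam * ν (HA ×ˢ HC))
    (hκ21 : ∀ (HA : Set (ιA → ℝ)) (HC : Set (ιC → ℝ)), MeasurableSet HA → MeasurableSet HC →
      HA ⊆ box2 ιA → HC ⊆ box1 ιC → κ (HA ×ˢ HC) = lam * ν (HA ×ˢ HC))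
    (hκ22 : ∀ (HA : Set (ιA → ℝ)) (HC : Set (ιC → ℝ)), MeasurableSet HA → MeasurableSet HC →
      HA ⊆ box2 ιA → HC ⊆ box2 ιC → κ (HA ×ˢ HC) = lam * ν (HA ×ˢ HC))
    (hκ11 : ∀ (HA : Set (ιA → ℝ)) (HC : Set (ιC → ℝ)), MeasurableSet HA → MeasurableSet HC →
      HA ⊆ box1 ιA → HC ⊆ box1 ιC →
      κ (HA ×ˢ HC) = κ (HA ×ˢ box2 ιC) * κ (box2 ιA ×ˢ HC) / κ (box2 ιA ×ˢ box2 ιC)) :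
    (∀ k : ιA, κ {p | 1 < p.1 k} ≠ 0 →
      condIndepOn κ {p | 1 < p.1 k} Prod.fst Prod.snd) ∧
    (∀ k : ιC, κ {p | 1 < p.2 k} ≠ 0 →
      condIndepOn κ {p | 1 < p.2 k} Prod.fst Prod.snd) := by
  classical
  have hF : Measurable fun ω => (YA ω, YC ω) := hA.prodMk hC
  have hνP : IsProbabilityMeasure ν := hν ▸ Measure.isProbabilityMeasure_map hF.aemeasurable
  by_cases hcnt : Countable ιA ∧ Countable ιC
  case neg =>
    -- the hypotheses are contradictory: a measurable hull of `(omEH)ᶜ` must be `univ`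
    exfalso
    obtain ⟨M, hMsub, hMmeas, hMnull⟩ := exists_measurable_superset_of_null hsupp
    obtain ⟨JA, JC, hJA, hJC, hdep⟩ := prod_dependsOn hMmeas
    have hMuniv : M = univ := by
      ext p
      simp only [mem_univ, iff_true]
      rcases not_and_or.mp hcnt with h | h
      · obtain ⟨i0, hi0⟩ : ∃ i0, i0 ∉ JA := by
          by_contra hno
          push_neg at hno
          exact h (Set.countable_univ_iff.mp (hJA.mono fun i _ => hno i))
        set q : (ιA → ℝ) × (ιC → ℝ) := (Function.update p.1 i0 (-1), p.2) with hq
        have hqM : q ∈ M := by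
          refine hMsub fun hmem => ?_
          have := hmem.1.1 i0
          rw [hq] at this
          simp [Function.update_self] at this
          linarith
        exact (hdep q p
          (fun i hi => by
            have hne : i ≠ i0 := fun he => hi0 (he ▸ hi)
            exact Function.update_of_ne hne _ _)
          (fun j _ => rfl)).mp hqM
      · obtain ⟨j0, hj0⟩ : ∃ j0, j0 ∉ JC := by
          by_contra hno
          push_neg at hno
          exact h (Set.countable_univ_iff.mp (hJC.mono fun j _ => hno j))
        set q : (ιA → ℝ) × (ιC → ℝ) := (p.1, Function.update p.2 j0 (-1)) with hq
        have hqM : q ∈ M := by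
          refine hMsub fun hmem => ?_
          have := hmem.1.2 j0
          rw [hq] at this
          simp [Function.update_self] at this
          linarith
        exact (hdep q p (fun i _ => rfl)
          (fun j hj => by
            have hne : j ≠ j0 := fun he => hj0 (he ▸ hj)
            exact Function.update_of_ne hne _ _)).mp hqM
    rw [hMuniv, measure_univ] at hMnull
    exact one_ne_zero hMnull
  case pos =>
  obtain ⟨hcA, hcC⟩ := hcnt
  -- measurability of the boxes
  have mb1A : MeasurableSet (box1 ιA) := by
    have : box1 ιA = ⋂ i, (fun x : ιA → ℝ => x i) ⁻¹' (Icc 0 1) := by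
      ext x; simp [box1]
    rw [this]
    exact MeasurableSet.iInter fun i => (measurable_pi_apply i) measurableSet_Icc
  have mb1C : MeasurableSet (box1 ιC) := by
    have : box1 ιC = ⋂ i, (fun x : ιC → ℝ => x i) ⁻¹' (Icc 0 1) := by
      ext x; simp [box1]
    rw [this]
    exact MeasurableSet.iInter fun i => (measurable_pi_apply i) measurableSet_Icc
  have moA : MeasurableSet {x : ιA → ℝ | ∀ i, 0 ≤ x i} := by
    have : {x : ιA → ℝ | ∀ i, 0 ≤ x i} = ⋂ i, (fun x : ιA → ℝ => x i) ⁻¹' (Ici 0) := by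
      ext x; simp
    rw [this]
    exact MeasurableSet.iInter fun i => (measurable_pi_apply i) measurableSet_Ici
  have moC : MeasurableSet {x : ιC → ℝ | ∀ i, 0 ≤ x i} := by
    have : {x : ιC → ℝ | ∀ i, 0 ≤ x i} = ⋂ i, (fun x : ιC → ℝ => x i) ⁻¹' (Ici 0) := by
      ext x; simp
    rw [this]
    exact MeasurableSet.iInter fun i => (measurable_pi_apply i) measurableSet_Ici
  have mb2A : MeasurableSet (box2 ιA) := moA.diff mb1A
  have mb2C : MeasurableSet (box2 ιC) := moC.diff mb1C
  set O : Set ((ιA → ℝ) × (ιC → ℝ)) := {x : ιA → ℝ | ∀ i, 0 ≤ x i} ×ˢ {x : ιC → ℝ | ∀ i, 0 ≤ x i}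
    with hO
  have mO : MeasurableSet O := moA.prod moC
  -- null sets of ν
  have hν11 : ν (box1 ιA ×ˢ box1 ιC) = 0 := by
    refine measure_mono_null ?_ hsupp
    intro p hp
    exact fun hmem => hmem.2 ⟨hp.1, hp.2⟩
  have hνO : ν Oᶜ = 0 := by
    refine measure_mono_null (compl_subset_compl.mpr fun p hp => ?_) hsupp
    exact ⟨hp.1.1, hp.1.2⟩
  -- notation
  set a := ν (box1 ιA ×ˢ box2 ιC) with ha
  set b := ν (box2 ιA ×ˢ box1 ιC) with hb
  set c := ν (box2 ιA ×ˢ box2 ιC) with hc'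
  -- disjointness helpers
  have d12A : Disjoint (box1 ιA) (box2 ιA) := Set.disjoint_left.mpr fun x h1 h2 => h2.2 h1
  have d12C : Disjoint (box1 ιC) (box2 ιC) := Set.disjoint_left.mpr fun x h1 h2 => h2.2 h1
  have dA : ∀ (s t : Set (ιC → ℝ)), Disjoint (box1 ιA ×ˢ s) (box2 ιA ×ˢ t) := fun s t =>
    Set.disjoint_left.mpr fun p hp hq => Set.disjoint_left.mp d12A hp.1 hq.1
  have dC : ∀ (s t : Set (ιA → ℝ)), Disjoint (s ×ˢ box1 ιC) (t ×ˢ box2 ιC) := fun s t =>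
    Set.disjoint_left.mpr fun p hp hq => Set.disjoint_left.mp d12C hp.2 hq.2
  -- a + b + c = 1
  have habc : a + b + c = 1 := by
    have hdisj1 : Disjoint (box1 ιA ×ˢ box2 ιC) (box2 ιA ×ˢ box1 ιC ∪ box2 ιA ×ˢ box2 ιC) :=
      Set.disjoint_union_right.mpr ⟨dA _ _, dA _ _⟩
    have hU : ν (box1 ιA ×ˢ box2 ιC ∪ (box2 ιA ×ˢ box1 ιC ∪ box2 ιA ×ˢ box2 ιC)) = a + b + c := by
      rw [measure_union hdisj1 ((mb2A.prod mb1C).union (mb2A.prod mb2C)),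
        measure_union (dC _ _) (mb2A.prod mb2C), add_assoc]
    have hUc : ν (box1 ιA ×ˢ box2 ιC ∪ (box2 ιA ×ˢ box1 ιC ∪ box2 ιA ×ˢ box2 ιC))ᶜ = 0 := by
      refine measure_mono_null (fun p hp => ?_) (measure_union_null hνO hν11)
      simp only [mem_compl_iff, mem_union] at hp
      push_neg at hp
      by_cases hpO : p ∈ O
      · right
        rcases em (p.1 ∈ box1 ιA) with h1 | h1
        · rcases em (p.2 ∈ box1 ιC) with h2 | h2
          · exact ⟨h1, h2⟩
          · exact absurd ⟨h1, ⟨hpO.2, h2⟩⟩ hp.1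
        · have h1' : p.1 ∈ box2 ιA := ⟨hpO.1, h1⟩
          rcases em (p.2 ∈ box1 ιC) with h2 | h2
          · exact absurd ⟨h1', h2⟩ hp.2.1
          · exact absurd ⟨h1', ⟨hpO.2, h2⟩⟩ hp.2.2
      · exact Or.inl hpO
    have h1 : (1 : ℝ≥0∞) ≤ a + b + c := by
      have hle := measure_union_le (μ := ν)
        (box1 ιA ×ˢ box2 ιC ∪ (box2 ιA ×ˢ box1 ιC ∪ box2 ιA ×ˢ box2 ιC))
        (box1 ιA ×ˢ box2 ιC ∪ (box2 ιA ×ˢ box1 ιC ∪ box2 ιA ×ˢ box2 ιC))ᶜ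
      rw [union_compl_self, hU, hUc, add_zero, measure_univ] at hle
      exact hle
    have h2 : a + b + c ≤ 1 := by
      rw [← hU]
      exact (measure_mono (subset_univ _)).trans_eq measure_univ
    exact le_antisymm h2 h1
  -- facts about lam
  have hc0 : c ≠ 0 := h22.ne'
  have hcT : c ≠ ⊤ := measure_ne_top ν _
  have habT : a * b ≠ ⊤ := ENNReal.mul_ne_top (measure_ne_top ν _) (measure_ne_top ν _)
  have hdivT : a * b / c ≠ ⊤ := by
    intro h
    rcases ENNReal.div_eq_top.mp h with ⟨-, h2⟩ | ⟨h1, -⟩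
    · exact hc0 h2
    · exact habT h1
  have hD0 : (1 : ℝ≥0∞) + a * b / c ≠ 0 := by simp
  have hDT : (1 : ℝ≥0∞) + a * b / c ≠ ⊤ := by
    simp [ENNReal.add_eq_top, hdivT]
  have hlam0 : lam ≠ 0 := by
    rw [hlam, one_div]
    exact ENNReal.inv_ne_zero.mpr hDT
  have hlamT : lam ≠ ⊤ := by
    rw [hlam, one_div]
    exact ENNReal.inv_ne_top.mpr hD0
  have hlamD : lam * (1 + a * b / c) = 1 := by
    rw [hlam, one_div]
    exact ENNReal.inv_mul_cancel hD0 hDT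
  -- the four blocks of κ
  have hk12 : κ (box1 ιA ×ˢ box2 ιC) = lam * a := hκ12 _ _ mb1A mb2C subset_rfl subset_rfl
  have hk21 : κ (box2 ιA ×ˢ box1 ιC) = lam * b := hκ21 _ _ mb2A mb1C subset_rfl subset_rfl
  have hk22 : κ (box2 ιA ×ˢ box2 ιC) = lam * c := hκ22 _ _ mb2A mb2C subset_rfl subset_rfl
  have hk11 : κ (box1 ιA ×ˢ box1 ιC) = lam * (a * b / c) := by
    rw [hκ11 _ _ mb1A mb1C subset_rfl subset_rfl, hk12, hk21, hk22]
    have e1 : lam * a * (lam * b) = lam * (lam * (a * b)) := by ring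
    rw [e1, ENNReal.mul_div_mul_left _ _ hlam0 hlamT, mul_div_assoc]
  -- κ lives on O
  have hκO : κ O = 1 := by
    have hOeq : O = (box1 ιA ×ˢ box1 ιC ∪ box1 ιA ×ˢ box2 ιC) ∪
        (box2 ιA ×ˢ box1 ιC ∪ box2 ιA ×ˢ box2 ιC) := by
      ext p
      simp only [hO, mem_prod, mem_union, mem_setOf_eq]
      constructor
      · rintro ⟨h1, h2⟩
        rcases em (p.1 ∈ box1 ιA) with hA1 | hA1
        · rcases em (p.2 ∈ box1 ιC) with hC1 | hC1
          · exact Or.inl (Or.inl ⟨hA1, hC1⟩)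
          · exact Or.inl (Or.inr ⟨hA1, h2, hC1⟩)
        · rcases em (p.2 ∈ box1 ιC) with hC1 | hC1
          · exact Or.inr (Or.inl ⟨⟨h1, hA1⟩, hC1⟩)
          · exact Or.inr (Or.inr ⟨⟨h1, hA1⟩, h2, hC1⟩)
      · rintro ((⟨h1, h2⟩ | ⟨h1, h2⟩) | (⟨h1, h2⟩ | ⟨h1, h2⟩))
        · exact ⟨fun i => (h1 i).1, fun j => (h2 j).1⟩
        · exact ⟨fun i => (h1 i).1, h2.1⟩
        · exact ⟨h1.1, fun j => (h2 j).1⟩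
        · exact ⟨h1.1, h2.1⟩
    have hd1 : Disjoint (box1 ιA ×ˢ box1 ιC ∪ box1 ιA ×ˢ box2 ιC)
        (box2 ιA ×ˢ box1 ιC ∪ box2 ιA ×ˢ box2 ιC) := by
      refine Set.disjoint_left.mpr fun p hp hq => ?_
      have h1 : p.1 ∈ box1 ιA := by rcases hp with h | h <;> exact h.1
      have h2 : p.1 ∈ box2 ιA := by rcases hq with h | h <;> exact h.1
      exact Set.disjoint_left.mp d12A h1 h2
    rw [hOeq, measure_union hd1 ((mb2A.prod mb1C).union (mb2A.prod mb2C)),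
      measure_union (dC _ _) (mb1A.prod mb2C), measure_union (dC _ _) (mb2A.prod mb2C),
      hk11, hk12, hk21, hk22, ← mul_add, ← mul_add, ← mul_add]
    have : a * b / c + a + (b + c) = 1 + a * b / c := by
      rw [add_assoc, ← add_assoc a b c, habc, add_comm]
    rw [this, hlamD]
  have hκOc : κ Oᶜ = 0 := by
    have := measure_compl mO (measure_ne_top κ _)
    rw [hκO, measure_univ] at this
    simpa using this
  -- key lemma, A side: κ = lam • ν on rectangles with first side above level 1 at coordinate k
  have keyA : ∀ (k : ιA) (HA : Set (ιA → ℝ)) (HC : Set (ιC → ℝ)), MeasurableSet HA →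
      MeasurableSet HC → HA ⊆ {x | 1 < x k} → κ (HA ×ˢ HC) = lam * ν (HA ×ˢ HC) := by
    intro k HA HC mHA mHC hsub
    set U := ((HA ∩ box2 ιA) ×ˢ (HC ∩ box1 ιC)) ∪ ((HA ∩ box2 ιA) ×ˢ (HC ∩ box2 ιC)) with hU
    have hUsub : U ⊆ HA ×ˢ HC := by
      rintro p (⟨h1, h2⟩ | ⟨h1, h2⟩) <;> exact ⟨h1.1, h2.1⟩
    have hcover : HA ×ˢ HC ⊆ U ∪ Oᶜ := by
      intro p hp
      by_cases hpO : p ∈ O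
      · left
        have h1 : p.1 ∈ HA ∩ box2 ιA :=
          ⟨hp.1, ⟨hpO.1, fun hb1 => absurd (hb1 k).2 (not_le.mpr (hsub hp.1))⟩⟩
        rcases em (p.2 ∈ box1 ιC) with h2 | h2
        · exact Or.inl ⟨h1, hp.2, h2⟩
        · exact Or.inr ⟨h1, hp.2, hpO.2, h2⟩
      · exact Or.inr hpO
    have hdisj : Disjoint ((HA ∩ box2 ιA) ×ˢ (HC ∩ box1 ιC))
        ((HA ∩ box2 ιA) ×ˢ (HC ∩ box2 ιC)) :=
      Set.disjoint_left.mpr fun p hp hq =>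
        Set.disjoint_left.mp d12C hp.2.2 hq.2.2
    have hκU : κ U = lam * ν U := by
      rw [hU, measure_union hdisj ((mHA.inter mb2A).prod (mHC.inter mb2C)),
        measure_union hdisj ((mHA.inter mb2A).prod (mHC.inter mb2C)),
        hκ21 _ _ (mHA.inter mb2A) (mHC.inter mb1C) inter_subset_right inter_subset_right,
        hκ22 _ _ (mHA.inter mb2A) (mHC.inter mb2C) inter_subset_right inter_subset_right,
        mul_add]
    have heq : ∀ (m : Measure ((ιA → ℝ) × (ιC → ℝ))), m Oᶜ = 0 → m (HA ×ˢ HC) = m U := by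
      intro m hm
      refine le_antisymm ?_ (measure_mono hUsub)
      calc m (HA ×ˢ HC) ≤ m (U ∪ Oᶜ) := measure_mono hcover
        _ ≤ m U + m Oᶜ := measure_union_le _ _
        _ = m U := by rw [hm, add_zero]
    rw [heq κ hκOc, heq ν hνO, hκU]
  -- key lemma, C side
  have keyC : ∀ (k : ιC) (HA : Set (ιA → ℝ)) (HC : Set (ιC → ℝ)), MeasurableSet HA →
      MeasurableSet HC → HC ⊆ {x | 1 < x k} → κ (HA ×ˢ HC) = lam * ν (HA ×ˢ HC) := by
    intro k HA HC mHA mHC hsub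
    set U := ((HA ∩ box1 ιA) ×ˢ (HC ∩ box2 ιC)) ∪ ((HA ∩ box2 ιA) ×ˢ (HC ∩ box2 ιC)) with hU
    have hUsub : U ⊆ HA ×ˢ HC := by
      rintro p (⟨h1, h2⟩ | ⟨h1, h2⟩) <;> exact ⟨h1.1, h2.1⟩
    have hcover : HA ×ˢ HC ⊆ U ∪ Oᶜ := by
      intro p hp
      by_cases hpO : p ∈ O
      · left
        have h2 : p.2 ∈ HC ∩ box2 ιC :=
          ⟨hp.2, ⟨hpO.2, fun hb1 => absurd (hb1 k).2 (not_le.mpr (hsub hp.2))⟩⟩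
        rcases em (p.1 ∈ box1 ιA) with h1 | h1
        · exact Or.inl ⟨⟨hp.1, h1⟩, h2⟩
        · exact Or.inr ⟨⟨hp.1, hpO.1, h1⟩, h2⟩
      · exact Or.inr hpO
    have hdisj : Disjoint ((HA ∩ box1 ιA) ×ˢ (HC ∩ box2 ιC))
        ((HA ∩ box2 ιA) ×ˢ (HC ∩ box2 ιC)) :=
      Set.disjoint_left.mpr fun p hp hq =>
        Set.disjoint_left.mp d12A hp.1.2 hq.1.2
    have hκU : κ U = lam * ν U := by
      rw [hU, measure_union hdisj ((mHA.inter mb2A).prod (mHC.inter mb2C)),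
        measure_union hdisj ((mHA.inter mb2A).prod (mHC.inter mb2C)),
        hκ12 _ _ (mHA.inter mb1A) (mHC.inter mb2C) inter_subset_right inter_subset_right,
        hκ22 _ _ (mHA.inter mb2A) (mHC.inter mb2C) inter_subset_right inter_subset_right,
        mul_add]
    have heq : ∀ (m : Measure ((ιA → ℝ) × (ιC → ℝ))), m Oᶜ = 0 → m (HA ×ˢ HC) = m U := by
      intro m hm
      refine le_antisymm ?_ (measure_mono hUsub)
      calc m (HA ×ˢ HC) ≤ m (U ∪ Oᶜ) := measure_mono hcover
        _ ≤ m U + m Oᶜ := measure_union_le _ _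
        _ = m U := by rw [hm, add_zero]
    rw [heq κ hκOc, heq ν hνO, hκU]
  constructor
  · intro k _
    have mSk : MeasurableSet {x : ιA → ℝ | 1 < x k} :=
      measurableSet_lt measurable_const (measurable_pi_apply k)
    have hE : MeasurableSet {p : (ιA → ℝ) × (ιC → ℝ) | 1 < p.1 k} :=
      measurableSet_lt measurable_const (measurable_fst.eval)
    refine aux_transfer κ ν lam hlam0 hlamT _ hE Prod.fst Prod.snd ?_ ?_
    · intro HA HC mHA mHC
      have hset : {p : (ιA → ℝ) × (ιC → ℝ) | 1 < p.1 k} ∩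
          (Prod.fst ⁻¹' HA ∩ Prod.snd ⁻¹' HC) = (HA ∩ {x | 1 < x k}) ×ˢ HC := by
        ext p
        simp only [mem_inter_iff, mem_preimage, mem_setOf_eq, mem_prod]
        tauto
      rw [hset]
      exact keyA k _ _ (mHA.inter mSk) mHC inter_subset_right
    · rw [hν]
      exact condIndepOn_map μ _ hF _ hE Prod.fst Prod.snd measurable_fst measurable_snd (hEHA k)
  · intro k _
    have mSk : MeasurableSet {x : ιC → ℝ | 1 < x k} :=
      measurableSet_lt measurable_const (measurable_pi_apply k)
    have hE : MeasurableSet {p : (ιA → ℝ) × (ιC → ℝ) | 1 < p.2 k} :=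
      measurableSet_lt measurable_const (measurable_snd.eval)
    refine aux_transfer κ ν lam hlam0 hlamT _ hE Prod.fst Prod.snd ?_ ?_
    · intro HA HC mHA mHC
      have hset : {p : (ιA → ℝ) × (ιC → ℝ) | 1 < p.2 k} ∩
          (Prod.fst ⁻¹' HA ∩ Prod.snd ⁻¹' HC) = HA ×ˢ (HC ∩ {x | 1 < x k}) := by
        ext p
        simp only [mem_inter_iff, mem_preimage, mem_setOf_eq, mem_prod]
        tauto
      rw [hset]
      exact keyC k _ _ mHA (mHC.inter mSk) inter_subset_right
    · rw [hν]
      exact condIndepOn_map μ _ hF _ hE Prod.fst Prod.snd measurable_fst measurable_snd (hEHC k)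


end
end
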